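/- arXiv:1909.02281 — 5 statements merged into one kernel-verified Lean document; each statement's English description precedes it below -/
import Mathlib

section
/- Let X be a Banach lattice and let S = (S(t))_{t≥0} be a convex C₀-semigroup on X. Then for every T > 0 and every x₀ ∈ X there exist constants L ≥ 0 and r > 0 such that ‖S(t)(x+y) − S(t)x‖ ≤ L‖y‖ for all t ∈ [0,T], all x ∈ X with ‖x − x₀‖ ≤ r, and all y ∈ X with ‖y‖ ≤ r. -/
/-!
Convexity turns boundedness into Lipschitz continuity: if a convex `F` is bounded by `M` on a
ball of radius `3r`, comparing `F` along the segment from `x` through `x + y` to a point at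
distance `r` bounds `F (x + y) - F x` above, and doing the same from `x + y` back through `x`
bounds it below; in a Banach lattice these order bounds give `‖F (x + y) - F x‖ ≤ 4M‖y‖ / r`.
It remains to bound `S t` uniformly for `t ∈ [0, T]` on some ball around `x₀`. Orbits are
bounded on `[0, T]` by strong continuity at `0` and the semigroup law, and every `S t` is
continuous, so the Baire category theorem gives a ball `closedBall z ρ` on which the family
is uniformly bounded. Convexity moves this bound to a ball around `x₀`: from above through
`w = ½ (2w - q) + ½ q` with `q = 2x₀ - z`, and from below through `x₀ = ½ w + ½ (2x₀ - w)`.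
-/

open Filter Topology Set Metric

theorem norm_le_norm_add_norm_of_le_of_le {α : Type*} [NormedAddCommGroup α] [Lattice α]
    [IsOrderedAddMonoid α] [HasSolidNorm α] {a v b : α} (ha : a ≤ v) (hb : v ≤ b) :
    ‖v‖ ≤ ‖a‖ + ‖b‖ := by
  have habs : |v| ≤ |(|a| ⊔ |b|)| := by
    rw [abs_of_nonneg (le_sup_of_le_left (abs_nonneg a)), abs_le']
    exact ⟨hb.trans ((le_abs_self b).trans le_sup_right),
      (neg_le_neg ha).trans ((neg_le_abs a).trans le_sup_left)⟩
  calc ‖v‖ ≤ ‖|a| ⊔ |b|‖ := norm_le_norm_of_abs_le_abs habs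
    _ ≤ ‖|a|‖ + ‖|b|‖ := norm_sup_le_add _ _
    _ = ‖a‖ + ‖b‖ := by rw [norm_abs_eq_norm, norm_abs_eq_norm]

section ConvexMap

variable {E β : Type*} [AddCommGroup E] [Module ℝ E] [AddCommGroup β] [PartialOrder β]
  [IsOrderedAddMonoid β] [Module ℝ β] {F : E → β}

theorem ConvexOn.map_add_smul_sub_le (hF : ConvexOn ℝ univ F) (x d : E) {a : ℝ} (ha₀ : 0 ≤ a)
    (ha₁ : a ≤ 1) : F (x + a • d) - F x ≤ a • (F (x + d) - F x) := by
  have h := hF.2 (mem_univ x) (mem_univ (x + d)) (sub_nonneg.2 ha₁) ha₀ (sub_add_cancel 1 a)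
  rw [show (1 - a) • x + a • (x + d) = x + a • d by module,
    show (1 - a) • F x + a • F (x + d) = F x + a • (F (x + d) - F x) by module] at h
  exact sub_le_iff_le_add'.2 h

theorem ConvexOn.two_smul_map_le_add (hF : ConvexOn ℝ univ F) {u v w : E}
    (h : u + v = (2 : ℝ) • w) : (2 : ℝ) • F w ≤ F u + F v := by
  have hw : w = (1 / 2 : ℝ) • u + (1 / 2 : ℝ) • v := by
    rw [← smul_add, h, smul_smul]; norm_num
  have hle := hF.2 (mem_univ u) (mem_univ v) (by norm_num : (0 : ℝ) ≤ 1 / 2)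
    (by norm_num : (0 : ℝ) ≤ 1 / 2) (by norm_num)
  rw [← hw] at hle
  calc (2 : ℝ) • F w ≤ F w + F w := by rw [two_smul]
    _ ≤ ((1 / 2 : ℝ) • F u + (1 / 2 : ℝ) • F v) + ((1 / 2 : ℝ) • F u + (1 / 2 : ℝ) • F v) :=
        add_le_add hle hle
    _ = F u + F v := by module

end ConvexMap

section ConvexOperator

variable {X : Type*} [NormedAddCommGroup X] [Lattice X] [IsOrderedAddMonoid X] [HasSolidNorm X]
  [NormedSpace ℝ X] {F : X → X}

theorem ConvexOn.norm_map_add_smul_sub_le (hF : ConvexOn ℝ univ F) {x u : X} {a M : ℝ}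
    (ha₀ : 0 ≤ a) (ha₁ : a ≤ 1) (hx : ‖F x‖ ≤ M) (hxu : ‖F (x + u)‖ ≤ M)
    (hy : ‖F (x + a • u)‖ ≤ M) (hyu : ‖F (x + a • u - u)‖ ≤ M) :
    ‖F (x + a • u) - F x‖ ≤ 4 * a * M := by
  set y := x + a • u
  have hupper := hF.map_add_smul_sub_le x u ha₀ ha₁
  have hlower := hF.map_add_smul_sub_le y (-u) ha₀ ha₁
  rw [show y + a • -u = x by simp [y], ← sub_eq_add_neg] at hlower
  have hsmul : ∀ v w : X, ‖F v‖ ≤ M → ‖F w‖ ≤ M → ‖a • (F v - F w)‖ ≤ a * (2 * M) := by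
    intro v w hv hw
    rw [norm_smul, Real.norm_of_nonneg ha₀]
    exact mul_le_mul_of_nonneg_left ((norm_sub_le _ _).trans (by linarith)) ha₀
  calc ‖F y - F x‖ ≤ ‖-(a • (F (y - u) - F y))‖ + ‖a • (F (x + u) - F x)‖ :=
        norm_le_norm_add_norm_of_le_of_le (by rw [neg_le]; simpa using hlower) hupper
    _ ≤ a * (2 * M) + a * (2 * M) := by
        rw [norm_neg]; exact add_le_add (hsmul _ _ hyu hy) (hsmul _ _ hxu hx)
    _ = 4 * a * M := by ring

theorem ConvexOn.norm_map_add_sub_le (hF : ConvexOn ℝ univ F) {c x y : X} {r M : ℝ}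
    (hr : 0 < r) (hM : ∀ w ∈ closedBall c (3 * r), ‖F w‖ ≤ M) (hx : x ∈ closedBall c r)
    (hy : ‖y‖ ≤ r) : ‖F (x + y) - F x‖ ≤ 4 * M / r * ‖y‖ := by
  rcases eq_or_ne y 0 with rfl | hy₀
  · simp
  have hny : 0 < ‖y‖ := norm_pos_iff.2 hy₀
  set u := (r / ‖y‖) • y
  have hu : ‖u‖ = r := by
    rw [norm_smul, Real.norm_of_nonneg (by positivity), div_mul_cancel₀ _ hny.ne']
  have hau : (‖y‖ / r) • u = y := by
    rw [smul_smul, show ‖y‖ / r * (r / ‖y‖) = 1 by field_simp, one_smul]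
  have hxc : ‖x - c‖ ≤ r := mem_closedBall_iff_norm.1 hx
  have hmem : ∀ w : X, ‖w - x‖ ≤ 2 * r → ‖F w‖ ≤ M := fun w hw =>
    hM w <| mem_closedBall_iff_norm.2 <| calc
      ‖w - c‖ = ‖(w - x) + (x - c)‖ := by rw [sub_add_sub_cancel]
      _ ≤ 3 * r := (norm_add_le _ _).trans (by linarith)
  have h := hF.norm_map_add_smul_sub_le (x := x) (u := u) (M := M) (by positivity)
    ((div_le_one hr).2 hy)
    (hmem x (by rw [sub_self, norm_zero]; positivity))
    (hmem _ (by rw [add_sub_cancel_left, hu]; linarith))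
    (hmem _ (by rw [hau, add_sub_cancel_left]; linarith))
    (hmem _ (by rw [hau, add_sub_assoc, add_sub_cancel_left]
                exact (norm_sub_le _ _).trans (by linarith)))
  rw [hau] at h
  calc ‖F (x + y) - F x‖ ≤ 4 * (‖y‖ / r) * M := h
    _ = 4 * M / r * ‖y‖ := by ring

theorem ConvexOn.continuous_of_bounded (hF : ConvexOn ℝ univ F)
    (hbdd : ∀ r : ℝ, 0 < r → ∃ M : ℝ, ∀ x : X, ‖x‖ ≤ r → ‖F x‖ ≤ M) : Continuous F := by
  refine continuous_iff_continuousAt.2 fun p => ?_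
  obtain ⟨M, hM⟩ := hbdd (‖p‖ + 3) (by positivity)
  have hball : ∀ w ∈ closedBall p (3 * 1), ‖F w‖ ≤ M := fun w hw =>
    hM w ((norm_le_norm_add_norm_sub' w p).trans (by linarith [mem_closedBall_iff_norm.1 hw]))
  have hlip : ∀ x ∈ closedBall p 1, ‖F x - F p‖ ≤ 4 * M * ‖x - p‖ := fun x hx => by
    simpa using hF.norm_map_add_sub_le one_pos hball (mem_closedBall_self zero_le_one)
      (y := x - p) (mem_closedBall_iff_norm.1 hx)
  rw [ContinuousAt, tendsto_iff_norm_sub_tendsto_zero]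
  refine squeeze_zero' (Eventually.of_forall fun _ => norm_nonneg _)
    (eventually_of_mem (closedBall_mem_nhds p one_pos) hlip) ?_
  simpa using ((continuous_sub_right p).norm.const_mul (4 * M)).tendsto p

theorem ConvexOn.norm_le_of_norm_le_on_closedBall (hF : ConvexOn ℝ univ F) {z x₀ : X}
    {ρ K C₀ C₁ : ℝ} (hK : ∀ w ∈ closedBall z ρ, ‖F w‖ ≤ K) (hx₀ : ‖F x₀‖ ≤ C₀)
    (hq : ‖F ((2 : ℝ) • x₀ - z)‖ ≤ C₁) : ∀ w ∈ closedBall x₀ (ρ / 2), ‖F w‖ ≤ 2 * C₀ + K + C₁ := by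
  set q := (2 : ℝ) • x₀ - z with hq_def
  have hupper : ∀ v ∈ closedBall x₀ (ρ / 2),
      (2 : ℝ) • F v ≤ F ((2 : ℝ) • v - q) + F q ∧ ‖F ((2 : ℝ) • v - q) + F q‖ ≤ K + C₁ := by
    intro v hv
    have hmem : (2 : ℝ) • v - q ∈ closedBall z ρ := by
      rw [mem_closedBall_iff_norm, hq_def, show (2 : ℝ) • v - ((2 : ℝ) • x₀ - z) - z =
        (2 : ℝ) • (v - x₀) by module, norm_smul, Real.norm_two]
      linarith [mem_closedBall_iff_norm.1 hv]
    exact ⟨hF.two_smul_map_le_add (sub_add_cancel _ _),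
      (norm_add_le _ _).trans (add_le_add (hK _ hmem) hq)⟩
  intro w hw
  have hw' : (2 : ℝ) • x₀ - w ∈ closedBall x₀ (ρ / 2) := by
    rwa [mem_closedBall_iff_norm, show (2 : ℝ) • x₀ - w - x₀ = -(w - x₀) by module, norm_neg,
      ← mem_closedBall_iff_norm]
  obtain ⟨hup, hup_norm⟩ := hupper w hw
  obtain ⟨hup', hup_norm'⟩ := hupper _ hw'
  have hmid : (2 : ℝ) • F x₀ ≤ F w + F ((2 : ℝ) • x₀ - w) :=
    hF.two_smul_map_le_add (add_sub_cancel _ _)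
  have hlow : (4 : ℝ) • F x₀ - (F ((2 : ℝ) • ((2 : ℝ) • x₀ - w) - q) + F q) ≤ (2 : ℝ) • F w := by
    rw [sub_le_iff_le_add]
    calc (4 : ℝ) • F x₀ = (2 : ℝ) • F x₀ + (2 : ℝ) • F x₀ := by module
      _ ≤ (F w + F ((2 : ℝ) • x₀ - w)) + (F w + F ((2 : ℝ) • x₀ - w)) := add_le_add hmid hmid
      _ = (2 : ℝ) • F w + (2 : ℝ) • F ((2 : ℝ) • x₀ - w) := by module
      _ ≤ _ := add_le_add_right hup' _
  have hlow_norm : ‖(4 : ℝ) • F x₀ - (F ((2 : ℝ) • ((2 : ℝ) • x₀ - w) - q) + F q)‖ ≤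
      4 * C₀ + (K + C₁) := by
    refine (norm_sub_le _ _).trans (add_le_add ?_ hup_norm')
    rw [norm_smul, Real.norm_of_nonneg (by norm_num)]
    linarith
  have h := norm_le_norm_add_norm_of_le_of_le hlow hup
  rw [norm_smul, Real.norm_two] at h
  linarith

end ConvexOperator

theorem exists_closedBall_forall_norm_le_of_forall_bounded {ι X E : Type*} [PseudoMetricSpace X]
    [BaireSpace X] [Nonempty X] [SeminormedAddCommGroup E] {f : ι → X → E}
    (hf : ∀ i, Continuous (f i)) (hbdd : ∀ x, ∃ C, ∀ i, ‖f i x‖ ≤ C) :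
    ∃ z, ∃ ρ > 0, ∃ K, ∀ i, ∀ x ∈ closedBall z ρ, ‖f i x‖ ≤ K := by
  have hclosed : ∀ n : ℕ, IsClosed {x | ∀ i, ‖f i x‖ ≤ n} := fun n => by
    simp only [ofPred_forall]
    exact isClosed_iInter fun i => isClosed_le (hf i).norm continuous_const
  have hcover : ⋃ n : ℕ, {x | ∀ i, ‖f i x‖ ≤ n} = univ := eq_univ_of_forall fun x => by
    obtain ⟨C, hC⟩ := hbdd x
    obtain ⟨n, hn⟩ := exists_nat_ge C
    exact mem_iUnion.2 ⟨n, fun i => (hC i).trans hn⟩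
  obtain ⟨n, z, hz⟩ := nonempty_interior_of_iUnion_of_closed hclosed hcover
  obtain ⟨ρ, hρ, hball⟩ := nhds_basis_closedBall.mem_iff.1 (mem_interior_iff_mem_nhds.1 hz)
  exact ⟨z, ρ, hρ, n, fun i x hx => hball hx i⟩

theorem exists_pos_forall_mem_Icc_norm_le {E : Type*} [SeminormedAddCommGroup E] {f : ℝ → E}
    {C : ℝ} (hf : ContinuousWithinAt f (Ici 0) 0) (h₀ : ‖f 0‖ < C) :
    ∃ δ > 0, ∀ t ∈ Icc 0 δ, ‖f t‖ ≤ C := by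
  obtain ⟨δ, hδ, hsub⟩ :=
    mem_nhdsGE_iff_exists_Icc_subset.1 (hf.norm.eventually (gt_mem_nhds h₀))
  exact ⟨δ, hδ, fun t ht => (hsub ht).le⟩

section Semigroup

variable {X : Type*} [SeminormedAddCommGroup X] (S : ℝ → X → X)

theorem exists_norm_orbit_le_of_Icc
    (hbdd : ∀ t : ℝ, 0 ≤ t → ∀ r : ℝ, 0 < r → ∃ M : ℝ, ∀ x : X, ‖x‖ ≤ r → ‖S t x‖ ≤ M)
    (hsg : ∀ s t : ℝ, 0 ≤ s → 0 ≤ t → ∀ x : X, S (t + s) x = S t (S s x))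
    {p : X} {δ C₀ : ℝ} (hδ : 0 < δ) (hp : ∀ t ∈ Icc 0 δ, ‖S t p‖ ≤ C₀) (T : ℝ) :
    ∃ C, ∀ t ∈ Icc 0 T, ‖S t p‖ ≤ C := by
  have hstep : ∀ n : ℕ, ∃ C, ∀ t ∈ Icc 0 (n * δ), ‖S t p‖ ≤ C := by
    intro n
    induction n with
    | zero => exact ⟨C₀, fun t ht => hp t ⟨ht.1, (by simpa using ht.2 : t ≤ 0).trans hδ.le⟩⟩
    | succ n ih =>
      obtain ⟨C, hC⟩ := ih
      have hnδ : 0 ≤ n * δ := by positivity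
      obtain ⟨M, hM⟩ := hbdd (n * δ) hnδ (max C₀ 1) (by positivity)
      refine ⟨max C M, fun t ht => ?_⟩
      rcases le_or_gt t (n * δ) with hle | hlt
      · exact (hC t ⟨ht.1, hle⟩).trans (le_max_left _ _)
      · have hs : t - n * δ ∈ Icc 0 δ := ⟨by linarith, by push_cast at ht; linarith [ht.2]⟩
        rw [← add_sub_cancel (n * δ) t, hsg _ _ hs.1 hnδ]
        exact (hM _ ((hp _ hs).trans (le_max_left _ _))).trans (le_max_right _ _)
  obtain ⟨n, hn⟩ := exists_nat_ge (T / δ)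
  obtain ⟨C, hC⟩ := hstep n
  exact ⟨C, fun t ht => hC t ⟨ht.1, ht.2.trans ((div_le_iff₀ hδ).1 hn)⟩⟩

theorem exists_norm_orbit_le
    (hbdd : ∀ t : ℝ, 0 ≤ t → ∀ r : ℝ, 0 < r → ∃ M : ℝ, ∀ x : X, ‖x‖ ≤ r → ‖S t x‖ ≤ M)
    (hid : ∀ x : X, S 0 x = x)
    (hsg : ∀ s t : ℝ, 0 ≤ s → 0 ≤ t → ∀ x : X, S (t + s) x = S t (S s x))
    (hc0 : ∀ x : X, Tendsto (fun t : ℝ => S t x) (𝓝[>] (0 : ℝ)) (𝓝 x)) (p : X) (T : ℝ) :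
    ∃ C, ∀ t ∈ Icc 0 T, ‖S t p‖ ≤ C := by
  have hcont : ContinuousWithinAt (fun t => S t p) (Ici 0) 0 :=
    continuousWithinAt_Ioi_iff_Ici.1 (by rw [ContinuousWithinAt, hid]; exact hc0 p)
  obtain ⟨δ, hδ, hp⟩ := exists_pos_forall_mem_Icc_norm_le hcont (C := ‖p‖ + 1) (by simp [hid])
  exact exists_norm_orbit_le_of_Icc S hbdd hsg hδ hp T

end Semigroup

theorem convex_semigroup_local_lipschitz_increment_general
    {X : Type*} [NormedAddCommGroup X] [Lattice X] [IsOrderedAddMonoid X] [HasSolidNorm X]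
    [NormedSpace ℝ X] [CompleteSpace X]
    (S : ℝ → X → X)
    (hconv : ∀ t : ℝ, 0 ≤ t → ∀ x y : X, ∀ a : ℝ, 0 ≤ a → a ≤ 1 →
      S t (a • x + (1 - a) • y) ≤ a • S t x + (1 - a) • S t y)
    (hbdd : ∀ t : ℝ, 0 ≤ t → ∀ r : ℝ, 0 < r → ∃ M : ℝ, ∀ x : X, ‖x‖ ≤ r → ‖S t x‖ ≤ M)
    (hid : ∀ x : X, S 0 x = x)
    (hsg : ∀ s t : ℝ, 0 ≤ s → 0 ≤ t → ∀ x : X, S (t + s) x = S t (S s x))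
    (hc0 : ∀ x : X, Tendsto (fun t : ℝ => S t x) (𝓝[>] (0 : ℝ)) (𝓝 x))
    (T : ℝ) (hT : 0 < T) (x₀ : X) :
    ∃ L : ℝ, 0 ≤ L ∧ ∃ r : ℝ, 0 < r ∧
      ∀ t : ℝ, t ∈ Icc (0 : ℝ) T → ∀ x : X, ‖x - x₀‖ ≤ r → ∀ y : X, ‖y‖ ≤ r →
        ‖S t (x + y) - S t x‖ ≤ L * ‖y‖ := by
  have : Nonempty X := ⟨x₀⟩
  have hF : ∀ t, 0 ≤ t → ConvexOn ℝ univ (S t) := fun t ht =>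
    ⟨convex_univ, fun x _ y _ a b ha hb hab => by
      obtain rfl : b = 1 - a := by linarith
      exact hconv t ht x y a ha (by linarith)⟩
  have horbit := exists_norm_orbit_le S hbdd hid hsg hc0
  obtain ⟨z, ρ, hρ, K, hK⟩ := exists_closedBall_forall_norm_le_of_forall_bounded
    (f := fun t : Icc (0 : ℝ) T => S t)
    (fun t => (hF t t.2.1).continuous_of_bounded (hbdd t t.2.1))
    (fun p => (horbit p T).imp fun _ hC t => hC t t.2)
  obtain ⟨C₀, hC₀⟩ := horbit x₀ T
  obtain ⟨C₁, hC₁⟩ := horbit ((2 : ℝ) • x₀ - z) T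
  set M := 2 * C₀ + K + C₁
  have hM : ∀ t ∈ Icc 0 T, ∀ w ∈ closedBall x₀ (ρ / 2), ‖S t w‖ ≤ M := fun t ht =>
    (hF t ht.1).norm_le_of_norm_le_on_closedBall (hK ⟨t, ht⟩) (hC₀ t ht) (hC₁ t ht)
  have hM₀ : 0 ≤ M :=
    (norm_nonneg _).trans (hM 0 ⟨le_rfl, hT.le⟩ x₀ (mem_closedBall_self (by positivity)))
  refine ⟨4 * M / (ρ / 6), by positivity, ρ / 6, by positivity, fun t ht x hx y hy => ?_⟩
  exact (hF t ht.1).norm_map_add_sub_le (by positivity)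
    (fun w hw => hM t ht w (closedBall_subset_closedBall (by linarith) hw))
    (mem_closedBall_iff_norm.2 hx) hy

/-- For a convex C₀-semigroup `S` on a Banach lattice `X`, for every `T > 0`
and `x₀ ∈ X` there exist `L ≥ 0` and `r > 0` such that
`‖S(t)(x+y) − S(t)x‖ ≤ L‖y‖` for all `t ∈ [0,T]`, `‖x − x₀‖ ≤ r`, `‖y‖ ≤ r`. -/
theorem convex_semigroup_local_lipschitz_increment
    {X : Type*} [NormedAddCommGroup X] [Lattice X] [IsOrderedAddMonoid X] [HasSolidNorm X]
    [NormedSpace ℝ X] [CompleteSpace X]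
    [PosSMulStrictMono ℝ X] [PosSMulReflectLT ℝ X]
    (S : ℝ → X → X)
    (hconv : ∀ t : ℝ, 0 ≤ t → ∀ x y : X, ∀ a : ℝ, 0 ≤ a → a ≤ 1 →
      S t (a • x + (1 - a) • y) ≤ a • S t x + (1 - a) • S t y)
    (hbdd : ∀ t : ℝ, 0 ≤ t → ∀ r : ℝ, 0 < r → ∃ M : ℝ, ∀ x : X, ‖x‖ ≤ r → ‖S t x‖ ≤ M)
    (hid : ∀ x : X, S 0 x = x)
    (hsg : ∀ s t : ℝ, 0 ≤ s → 0 ≤ t → ∀ x : X, S (t + s) x = S t (S s x))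
    (hc0 : ∀ x : X, Tendsto (fun t : ℝ => S t x) (𝓝[>] (0 : ℝ)) (𝓝 x))
    (T : ℝ) (hT : 0 < T) (x₀ : X) :
    ∃ L : ℝ, 0 ≤ L ∧ ∃ r : ℝ, 0 < r ∧
      ∀ t : ℝ, t ∈ Icc (0 : ℝ) T → ∀ x : X, ‖x - x₀‖ ≤ r → ∀ y : X, ‖y‖ ≤ r →
        ‖S t (x + y) - S t x‖ ≤ L * ‖y‖ :=
  convex_semigroup_local_lipschitz_increment_general S hconv hbdd hid hsg hc0 T hT x₀
end

section
/- Let X be a Banach lattice and let S = (S(t))_{t≥0} be a sublinear C₀-semigroup on X. Then there exist constants ω ∈ ℝ and M ≥ 1 such that ‖S(t)x‖ ≤ M e^{ωt} ‖x‖ for all x ∈ X and all t ≥ 0. -/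
open Filter Topology Set

/-! A sublinear `T` satisfies `-T (-x) ≤ T x`, so in a Banach lattice `‖T x - T y‖` is bounded by
`‖T (x - y)‖ + ‖T (y - x)‖`: bounded sublinear maps are Lipschitz, and the Baire category argument
behind the uniform boundedness principle goes through for them. Strong continuity makes the orbits
`S tₙ x` bounded along any `tₙ ↓ 0`, so the principle yields `‖S t x‖ ≤ K ‖x‖` for `t ∈ [0, δ]`;
the semigroup law then gives `‖S t x‖ ≤ K ^ (⌊t / δ⌋ + 1) ‖x‖ ≤ K e^{(log K / δ) t} ‖x‖`. -/

structure IsSublinearMap {X Y : Type*} [AddCommGroup X] [Module ℝ X] [AddCommGroup Y] [LE Y]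
    [Module ℝ Y] (T : X → Y) : Prop where
  map_add_le : ∀ x y, T (x + y) ≤ T x + T y
  map_smul_of_pos : ∀ a : ℝ, 0 < a → ∀ x, T (a • x) = a • T x

theorem norm_le_norm_add_norm_of_le_of_neg_le {Y : Type*} [NormedAddCommGroup Y] [Lattice Y]
    [HasSolidNorm Y] [IsOrderedAddMonoid Y] {a u v : Y} (hu : a ≤ u) (hv : -a ≤ v) :
    ‖a‖ ≤ ‖u‖ + ‖v‖ := by
  have habs : |a| ≤ |u| + |v| := abs_le'.mpr
    ⟨hu.trans ((le_abs_self u).trans (le_add_of_nonneg_right (abs_nonneg v))),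
      hv.trans ((le_abs_self v).trans (le_add_of_nonneg_left (abs_nonneg u)))⟩
  calc ‖a‖ ≤ ‖|u| + |v|‖ :=
        norm_le_norm_of_abs_le_abs (habs.trans (abs_of_nonneg (by positivity)).ge)
    _ ≤ ‖|u|‖ + ‖|v|‖ := norm_add_le _ _
    _ = ‖u‖ + ‖v‖ := by rw [norm_abs_eq_norm, norm_abs_eq_norm]

namespace IsSublinearMap

section Algebra

variable {X Y : Type*} [AddCommGroup X] [Module ℝ X] [AddCommGroup Y] [PartialOrder Y]
  [Module ℝ Y] {T : X → Y}

theorem of_convex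
    (hconv : ∀ x y : X, ∀ a : ℝ, 0 ≤ a → a ≤ 1 → T (a • x + (1 - a) • y) ≤ a • T x + (1 - a) • T y)
    (hsmul : ∀ a : ℝ, 0 < a → ∀ x, T (a • x) = a • T x) : IsSublinearMap T where
  map_add_le x y := by
    have hmid : x + y = (2 : ℝ)⁻¹ • (2 : ℝ) • x + (1 - (2 : ℝ)⁻¹) • (2 : ℝ) • y := by
      norm_num [smul_smul]
    have h := hconv ((2 : ℝ) • x) ((2 : ℝ) • y) (2 : ℝ)⁻¹ (by norm_num) (by norm_num)
    rw [← hmid, hsmul 2 two_pos, hsmul 2 two_pos] at h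
    norm_num [smul_smul] at h
    exact h
  map_smul_of_pos := hsmul

theorem map_zero (hT : IsSublinearMap T) : T 0 = 0 := by
  have h := hT.map_smul_of_pos 2 two_pos 0
  rw [smul_zero, two_smul] at h
  exact left_eq_add.mp h

theorem map_sub_le [IsOrderedAddMonoid Y] (hT : IsSublinearMap T) (x y : X) :
    T x - T y ≤ T (x - y) := by
  simpa using hT.map_add_le (x - y) y

theorem neg_map_le_map_neg [IsOrderedAddMonoid Y] (hT : IsSublinearMap T) (x : X) :
    -T x ≤ T (-x) := by
  simpa [hT.map_zero] using hT.map_sub_le 0 x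

end Algebra

theorem norm_map_le_of_forall_norm_le {X Y : Type*} [NormedAddCommGroup X] [NormedSpace ℝ X]
    [NormedAddCommGroup Y] [PartialOrder Y] [NormedSpace ℝ Y] {T : X → Y} (hT : IsSublinearMap T)
    {r C : ℝ} (hr : 0 < r) (hC : ∀ x, ‖x‖ ≤ r → ‖T x‖ ≤ C) (x : X) : ‖T x‖ ≤ C / r * ‖x‖ := by
  rcases eq_or_ne x 0 with rfl | hx
  · simp [hT.map_zero]
  set a := ‖x‖ / r
  have ha : 0 < a := by positivity
  have hx : x = a • a⁻¹ • x := (smul_inv_smul₀ ha.ne' x).symm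
  have hbound : ‖T (a⁻¹ • x)‖ ≤ C := hC _ <| by
    rw [norm_smul, norm_inv, Real.norm_of_nonneg ha.le, inv_div, div_mul_cancel₀ _ (by positivity)]
  calc ‖T x‖ = a * ‖T (a⁻¹ • x)‖ := by
        rw [hx, hT.map_smul_of_pos a ha, norm_smul, Real.norm_of_nonneg ha.le, ← hx]
    _ ≤ a * C := by gcongr
    _ = C / r * ‖x‖ := by ring

section Norm

variable {X Y : Type*} [NormedAddCommGroup X] [NormedSpace ℝ X]
  [NormedAddCommGroup Y] [Lattice Y] [HasSolidNorm Y] [IsOrderedAddMonoid Y] [NormedSpace ℝ Y]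
  {T : X → Y}

theorem norm_map_sub_le (hT : IsSublinearMap T) (x y : X) :
    ‖T x - T y‖ ≤ ‖T (x - y)‖ + ‖T (y - x)‖ :=
  norm_le_norm_add_norm_of_le_of_neg_le (hT.map_sub_le x y) (by simpa using hT.map_sub_le y x)

theorem continuous_of_norm_le (hT : IsSublinearMap T) {C : ℝ} (hC : ∀ x, ‖T x‖ ≤ C * ‖x‖) :
    Continuous T := by
  refine (LipschitzWith.of_dist_le' (K := 2 * C) fun x y => ?_).continuous
  calc dist (T x) (T y) ≤ ‖T (x - y)‖ + ‖T (y - x)‖ := by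
        rw [dist_eq_norm]; exact hT.norm_map_sub_le x y
    _ ≤ C * ‖x - y‖ + C * ‖y - x‖ := add_le_add (hC _) (hC _)
    _ = 2 * C * dist x y := by rw [norm_sub_rev y x, dist_eq_norm]; ring

theorem continuous_of_bounded (hT : IsSublinearMap T) {r C : ℝ} (hr : 0 < r)
    (hC : ∀ x, ‖x‖ ≤ r → ‖T x‖ ≤ C) : Continuous T :=
  hT.continuous_of_norm_le (hT.norm_map_le_of_forall_norm_le hr hC)

theorem norm_map_le_of_forall_mem_ball (hT : IsSublinearMap T) {x₀ : X} {ε C : ℝ}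
    (hC : ∀ y ∈ Metric.ball x₀ ε, ‖T y‖ ≤ C) {z : X} (hz : ‖z‖ < ε) :
    ‖T z‖ ≤ 2 * (C + ‖T (-x₀)‖) := by
  have hplus : T z ≤ T (x₀ + z) + T (-x₀) := by
    simpa using hT.map_add_le (x₀ + z) (-x₀)
  have hminus : -T z ≤ T (x₀ - z) + T (-x₀) := by
    have h := hT.map_add_le (x₀ - z) (-x₀)
    rw [show x₀ - z + -x₀ = -z by abel] at h
    exact (hT.neg_map_le_map_neg z).trans h
  calc ‖T z‖ ≤ ‖T (x₀ + z) + T (-x₀)‖ + ‖T (x₀ - z) + T (-x₀)‖ :=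
        norm_le_norm_add_norm_of_le_of_neg_le hplus hminus
    _ ≤ (‖T (x₀ + z)‖ + ‖T (-x₀)‖) + (‖T (x₀ - z)‖ + ‖T (-x₀)‖) :=
        add_le_add (norm_add_le _ _) (norm_add_le _ _)
    _ ≤ (C + ‖T (-x₀)‖) + (C + ‖T (-x₀)‖) := by
        gcongr <;> apply hC <;> simpa [dist_eq_norm] using hz
    _ = 2 * (C + ‖T (-x₀)‖) := by ring

end Norm

theorem exists_uniform_bound {ι X Y : Type*} [NormedAddCommGroup X] [NormedSpace ℝ X]
    [CompleteSpace X] [NormedAddCommGroup Y] [Lattice Y] [HasSolidNorm Y] [IsOrderedAddMonoid Y]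
    [NormedSpace ℝ Y] {T : ι → X → Y} (hT : ∀ i, IsSublinearMap (T i))
    (hcont : ∀ i, Continuous (T i)) (hbdd : ∀ x, ∃ C, ∀ i, ‖T i x‖ ≤ C) :
    ∃ C, ∀ i x, ‖T i x‖ ≤ C * ‖x‖ := by
  set F : ℕ → Set X := fun n => ⋂ i, {y | ‖T i y‖ ≤ n}
  have hclosed (n : ℕ) : IsClosed (F n) :=
    isClosed_iInter fun i => isClosed_le (hcont i).norm continuous_const
  have hcover : ⋃ n, F n = univ := eq_univ_of_forall fun y => by
    obtain ⟨C, hC⟩ := hbdd y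
    obtain ⟨n, hn⟩ := exists_nat_ge C
    exact mem_iUnion.mpr ⟨n, mem_iInter.mpr fun i => (hC i).trans hn⟩
  obtain ⟨n, x₀, hx₀⟩ := nonempty_interior_of_iUnion_of_closed hclosed hcover
  obtain ⟨ε, hε, hball⟩ := Metric.isOpen_iff.mp isOpen_interior x₀ hx₀
  obtain ⟨C₀, hC₀⟩ := hbdd (-x₀)
  refine ⟨2 * (n + C₀) / (ε / 2), fun i => (hT i).norm_map_le_of_forall_norm_le (by positivity)
    fun z hz => ?_⟩
  have hzε : ‖z‖ < ε := hz.trans_lt (half_lt_self hε)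
  calc ‖T i z‖ ≤ 2 * (n + ‖T i (-x₀)‖) := (hT i).norm_map_le_of_forall_mem_ball
        (fun y hy => mem_iInter.mp (interior_subset (hball hy)) i) hzε
    _ ≤ 2 * (n + C₀) := by gcongr; exact hC₀ i

end IsSublinearMap

section Semigroup

variable {X : Type*} [NormedAddCommGroup X] {S : ℝ → X → X}

theorem norm_le_pow_of_local_bound
    (hsg : ∀ s t : ℝ, 0 ≤ s → 0 ≤ t → ∀ x : X, S (t + s) x = S t (S s x)) {δ K : ℝ}
    (hδ : 0 ≤ δ) (hK : 0 ≤ K) (hloc : ∀ t, 0 ≤ t → t ≤ δ → ∀ x, ‖S t x‖ ≤ K * ‖x‖) (n : ℕ) :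
    ∀ t, 0 ≤ t → t ≤ (n + 1) * δ → ∀ x, ‖S t x‖ ≤ K ^ (n + 1) * ‖x‖ := by
  induction n with
  | zero => simpa using hloc
  | succ n ih =>
    intro t ht htn x
    set r := min t δ
    have hr : 0 ≤ r := le_min ht hδ
    have hs : 0 ≤ t - r := sub_nonneg.mpr (min_le_left t δ)
    have hsn : t - r ≤ (n + 1) * δ := by
      push_cast at htn
      rcases le_total t δ with h | h
      · simp only [r, min_eq_left h, sub_self]; positivity
      · simp only [r, min_eq_right h]; linarith
    calc ‖S t x‖ = ‖S (t - r) (S r x)‖ := by rw [← hsg r (t - r) hr hs, sub_add_cancel]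
      _ ≤ K ^ (n + 1) * ‖S r x‖ := ih _ hs hsn _
      _ ≤ K ^ (n + 1) * (K * ‖x‖) := by gcongr; exact hloc r hr (min_le_right t δ) x
      _ = K ^ (n + 1 + 1) * ‖x‖ := by ring

theorem norm_le_mul_exp_of_local_bound
    (hsg : ∀ s t : ℝ, 0 ≤ s → 0 ≤ t → ∀ x : X, S (t + s) x = S t (S s x)) {δ K : ℝ}
    (hδ : 0 < δ) (hK : 1 ≤ K) (hloc : ∀ t, 0 ≤ t → t ≤ δ → ∀ x, ‖S t x‖ ≤ K * ‖x‖)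
    {t : ℝ} (ht : 0 ≤ t) (x : X) : ‖S t x‖ ≤ K * Real.exp (Real.log K / δ * t) * ‖x‖ := by
  set n := ⌊t / δ⌋₊
  have htn : t ≤ (n + 1) * δ := by
    have := Nat.lt_floor_add_one (t / δ)
    rw [div_lt_iff₀ hδ] at this
    exact this.le
  have hpow : K ^ n ≤ Real.exp (Real.log K / δ * t) :=
    calc K ^ n = Real.exp (n * Real.log K) := by
          rw [Real.exp_nat_mul, Real.exp_log (by positivity)]
      _ ≤ Real.exp (t / δ * Real.log K) := by
          gcongr
          · exact Real.log_nonneg hK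
          · exact Nat.floor_le (by positivity)
      _ = Real.exp (Real.log K / δ * t) := by ring_nf
  calc ‖S t x‖ ≤ K ^ (n + 1) * ‖x‖ :=
        norm_le_pow_of_local_bound hsg hδ.le (by positivity) hloc n t ht htn x
    _ = K * K ^ n * ‖x‖ := by ring
    _ ≤ K * Real.exp (Real.log K / δ * t) * ‖x‖ := by gcongr

theorem exists_uniform_bound_near_zero [Lattice X] [HasSolidNorm X] [IsOrderedAddMonoid X]
    [NormedSpace ℝ X] [CompleteSpace X] (hsub : ∀ t, 0 ≤ t → IsSublinearMap (S t))
    (hcont : ∀ t, 0 ≤ t → Continuous (S t)) (hid : ∀ x, S 0 x = x)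
    (hc0 : ∀ x, Tendsto (fun t : ℝ => S t x) (𝓝[>] 0) (𝓝 x)) :
    ∃ δ > 0, ∃ K, ∀ t, 0 ≤ t → t ≤ δ → ∀ x, ‖S t x‖ ≤ K * ‖x‖ := by
  by_contra! h
  have hseq (n : ℕ) : ∃ t : ℝ, 0 < t ∧ t ≤ 1 / (n + 1) ∧ ∃ x, (n + 1) * ‖x‖ < ‖S t x‖ := by
    obtain ⟨t, ht, htn, x, hx⟩ := h (1 / (n + 1)) (by positivity) (n + 1)
    refine ⟨t, ht.lt_of_ne ?_, htn, x, hx⟩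
    rintro rfl
    rw [hid] at hx
    nlinarith [norm_nonneg x]
  choose t ht htn x hx using hseq
  have ht0 : Tendsto t atTop (𝓝[>] 0) :=
    tendsto_nhdsWithin_of_tendsto_nhds_of_eventually_within _
      (squeeze_zero (fun n => (ht n).le) htn tendsto_one_div_add_atTop_nhds_zero_nat)
      (Eventually.of_forall ht)
  obtain ⟨C, hC⟩ := IsSublinearMap.exists_uniform_bound (fun n => hsub (t n) (ht n).le)
    (fun n => hcont (t n) (ht n).le) fun y => by
      obtain ⟨C, hC⟩ := ((hc0 y).comp ht0).norm.bddAbove_range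
      exact ⟨C, fun n => hC (mem_range_self n)⟩
  obtain ⟨n, hn⟩ := exists_nat_gt C
  nlinarith [hx n, hC n (x n), norm_nonneg (x n)]

end Semigroup

theorem sublinear_semigroup_exponential_bound_general
    {X : Type*} [NormedAddCommGroup X] [Lattice X] [HasSolidNorm X]
    [IsOrderedAddMonoid X] [NormedSpace ℝ X] [CompleteSpace X]
    (S : ℝ → X → X)
    (hconv : ∀ t : ℝ, 0 ≤ t → ∀ x y : X, ∀ a : ℝ, 0 ≤ a → a ≤ 1 →
      S t (a • x + (1 - a) • y) ≤ a • S t x + (1 - a) • S t y)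
    (hposhom : ∀ t : ℝ, 0 ≤ t → ∀ a : ℝ, 0 < a → ∀ x : X, S t (a • x) = a • S t x)
    (hbdd : ∀ t : ℝ, 0 ≤ t → ∀ r : ℝ, 0 < r → ∃ M : ℝ, ∀ x : X, ‖x‖ ≤ r → ‖S t x‖ ≤ M)
    (hid : ∀ x : X, S 0 x = x)
    (hsg : ∀ s t : ℝ, 0 ≤ s → 0 ≤ t → ∀ x : X, S (t + s) x = S t (S s x))
    (hc0 : ∀ x : X, Tendsto (fun t : ℝ => S t x) (𝓝[>] (0 : ℝ)) (𝓝 x)) :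
    ∃ (ω : ℝ) (M : ℝ), 1 ≤ M ∧
      ∀ x : X, ∀ t : ℝ, 0 ≤ t → ‖S t x‖ ≤ M * Real.exp (ω * t) * ‖x‖ := by
  have hsub (t : ℝ) (ht : 0 ≤ t) : IsSublinearMap (S t) :=
    .of_convex (hconv t ht) (hposhom t ht)
  have hcont (t : ℝ) (ht : 0 ≤ t) : Continuous (S t) := by
    obtain ⟨M, hM⟩ := hbdd t ht 1 one_pos
    exact (hsub t ht).continuous_of_bounded one_pos hM
  obtain ⟨δ, hδ, K, hK⟩ := exists_uniform_bound_near_zero hsub hcont hid hc0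
  have hK' (t : ℝ) (ht₀ : 0 ≤ t) (htδ : t ≤ δ) (x : X) : ‖S t x‖ ≤ max K 1 * ‖x‖ :=
    (hK t ht₀ htδ x).trans (by gcongr; exact le_max_left K 1)
  exact ⟨Real.log (max K 1) / δ, max K 1, le_max_right K 1,
    fun x t ht => norm_le_mul_exp_of_local_bound hsg hδ (le_max_right K 1) hK' ht x⟩

/-- A sublinear C₀-semigroup on a Banach lattice satisfies
`‖S(t)x‖ ≤ M e^{ωt} ‖x‖` for some `ω ∈ ℝ`, `M ≥ 1`. -/
theorem sublinear_semigroup_exponential_bound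
    {X : Type*} [NormedAddCommGroup X] [Lattice X] [HasSolidNorm X]
    [IsOrderedAddMonoid X] [NormedSpace ℝ X] [CompleteSpace X]
    [PosSMulStrictMono ℝ X] [PosSMulReflectLT ℝ X]
    (S : ℝ → X → X)
    (hconv : ∀ t : ℝ, 0 ≤ t → ∀ x y : X, ∀ a : ℝ, 0 ≤ a → a ≤ 1 →
      S t (a • x + (1 - a) • y) ≤ a • S t x + (1 - a) • S t y)
    (hposhom : ∀ t : ℝ, 0 ≤ t → ∀ a : ℝ, 0 < a → ∀ x : X, S t (a • x) = a • S t x)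
    (hbdd : ∀ t : ℝ, 0 ≤ t → ∀ r : ℝ, 0 < r → ∃ M : ℝ, ∀ x : X, ‖x‖ ≤ r → ‖S t x‖ ≤ M)
    (hid : ∀ x : X, S 0 x = x)
    (hsg : ∀ s t : ℝ, 0 ≤ s → 0 ≤ t → ∀ x : X, S (t + s) x = S t (S s x))
    (hc0 : ∀ x : X, Tendsto (fun t : ℝ => S t x) (𝓝[>] (0 : ℝ)) (𝓝 x)) :
    ∃ (ω : ℝ) (M : ℝ), 1 ≤ M ∧
      ∀ x : X, ∀ t : ℝ, 0 ≤ t → ‖S t x‖ ≤ M * Real.exp (ω * t) * ‖x‖ :=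
  sublinear_semigroup_exponential_bound_general S hconv hposhom hbdd hid hsg hc0
end

section
/- Let X be a Banach lattice and let S = (S(t))_{t≥0} be a convex C₀-semigroup on X. Let x ∈ X be such that sup_{h∈(0,h₀]} ‖(S(h)x − x)/h‖ < ∞ for some h₀ > 0. Then the map [0,∞) → X, t ↦ S(t)x, is locally Lipschitz continuous: for every T > 0 there exists L_T ≥ 0 such that ‖S(t)x − S(s)x‖ ≤ L_T |t − s| for all s,t ∈ [0,T]. -/
/-!
A convex operator `Φ` on a Banach lattice satisfies `Φ u - Φ v ≤ λ • (Φ w - Φ v)` whenever `u` lies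
on the segment from `v` to `w` with ratio `λ`; applying this in both directions and using the solid
norm, `Φ` is Lipschitz on any ball on which it is bounded (with the ball enlarged a little).
Orbits of `S` are bounded on `[0, T]`, so by Baire's theorem all `S t` with `t ≤ T` are uniformly
bounded on some ball, and convexity transports this bound to a ball around `x`. Hence the `S t` are
uniformly Lipschitz near `x`, and for small `h`
`‖S (s + h) x - S s x‖ = ‖S s (S h x) - S s x‖ ≤ L ‖S h x - x‖ ≤ L M h`;
chaining such steps gives the Lipschitz bound on `[0, T]`.
-/

open Filter Topology Set Metric

section SolidNorm

variable {α : Type*} [NormedAddCommGroup α] [Lattice α] [HasSolidNorm α] [IsOrderedAddMonoid α]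

theorem norm_le_add_of_le_of_le {a b c : α} (hab : a ≤ b) (hbc : b ≤ c) : ‖b‖ ≤ ‖a‖ + ‖c‖ := by
  have hb : |b| ≤ |(|a| ⊔ |c|)| := by
    rw [abs_of_nonneg (le_sup_of_le_left (abs_nonneg a))]
    exact abs_le'.2 ⟨hbc.trans ((le_abs_self c).trans le_sup_right),
      (neg_le_neg hab).trans ((neg_le_abs a).trans le_sup_left)⟩
  calc ‖b‖ ≤ ‖|a| ⊔ |c|‖ := HasSolidNorm.solid hb
    _ ≤ ‖|a|‖ + ‖|c|‖ := norm_sup_le_add _ _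
    _ = ‖a‖ + ‖c‖ := by rw [norm_abs_eq_norm, norm_abs_eq_norm]

end SolidNorm

section ConvexOperator

variable {X : Type*} [NormedAddCommGroup X] [Lattice X] [IsOrderedAddMonoid X] [NormedSpace ℝ X]
  {Φ : X → X}

theorem ConvexOn.sub_le_smul_sub (hΦ : ConvexOn ℝ univ Φ) {a : ℝ} (ha₀ : 0 ≤ a) (ha₁ : a ≤ 1)
    (w v : X) : Φ (a • w + (1 - a) • v) - Φ v ≤ a • (Φ w - Φ v) := by
  have h := hΦ.2 (mem_univ w) (mem_univ v) ha₀ (sub_nonneg.2 ha₁) (add_sub_cancel a 1)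
  calc Φ (a • w + (1 - a) • v) - Φ v ≤ a • Φ w + (1 - a) • Φ v - Φ v := sub_le_sub_right h _
    _ = a • (Φ w - Φ v) := by module

/-- The chord from `v` through `u` is prolonged by `ρ` beyond `u` to a point `w`. -/
theorem ConvexOn.exists_sub_le_smul_sub (hΦ : ConvexOn ℝ univ Φ) {ρ : ℝ} (hρ : 0 < ρ) (u v : X) :
    ∃ w, ‖w - u‖ ≤ ρ ∧ Φ u - Φ v ≤ (‖u - v‖ / (‖u - v‖ + ρ)) • (Φ w - Φ v) := by
  rcases eq_or_ne u v with rfl | huv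
  · exact ⟨u, by simpa using hρ.le, by simp⟩
  set d := ‖u - v‖
  have hd : 0 < d := norm_pos_iff.2 (sub_ne_zero.2 huv)
  refine ⟨u + (ρ / d) • (u - v), ?_, ?_⟩
  · rw [add_sub_cancel_left, norm_smul, Real.norm_of_nonneg (by positivity),
      div_mul_cancel₀ _ hd.ne']
  · have hu : u = (d / (d + ρ)) • (u + (ρ / d) • (u - v)) + (1 - d / (d + ρ)) • v := by
      have h1 : 1 - d / (d + ρ) = ρ / (d + ρ) := by field_simp; ring
      have h2 : d / (d + ρ) * (ρ / d) = ρ / (d + ρ) := by field_simp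
      rw [h1, smul_add, smul_smul, h2, smul_sub, ← add_sub_assoc, sub_add_cancel, ← add_smul,
        ← add_div, div_self (by positivity), one_smul]
    conv_lhs => rw [hu]
    exact hΦ.sub_le_smul_sub (by positivity) (div_le_one_of_le₀ (by linarith) (by positivity)) _ _

variable [HasSolidNorm X]

theorem ConvexOn.norm_sub_le_of_norm_le_on_closedBall (hΦ : ConvexOn ℝ univ Φ) {x₀ : X}
    {R ρ C : ℝ} (hρ : 0 < ρ) (hC : ∀ p ∈ closedBall x₀ (R + ρ), ‖Φ p‖ ≤ C) {u v : X}
    (hu : u ∈ closedBall x₀ R) (hv : v ∈ closedBall x₀ R) :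
    ‖Φ u - Φ v‖ ≤ 4 * C / ρ * ‖u - v‖ := by
  have hR : closedBall x₀ R ⊆ closedBall x₀ (R + ρ) := closedBall_subset_closedBall (by linarith)
  have hC₀ : 0 ≤ C := (norm_nonneg _).trans (hC u (hR hu))
  have hnear : ∀ {p q}, q ∈ closedBall x₀ R → ‖p - q‖ ≤ ρ → p ∈ closedBall x₀ (R + ρ) :=
    fun {p q} hq hpq => (dist_triangle p q x₀).trans <| by
      rw [dist_eq_norm]; linarith [mem_closedBall.1 hq]
  have hdiff : ∀ {p q}, p ∈ closedBall x₀ (R + ρ) → q ∈ closedBall x₀ (R + ρ) →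
      ‖Φ p - Φ q‖ ≤ 2 * C := fun hp hq =>
    (norm_sub_le _ _).trans (by linarith [hC _ hp, hC _ hq])
  set d := ‖u - v‖
  set t := d / (d + ρ)
  have ht : 0 ≤ t := by positivity
  obtain ⟨w, hw, hupper⟩ := hΦ.exists_sub_le_smul_sub hρ u v
  obtain ⟨w', hw', hlower⟩ := hΦ.exists_sub_le_smul_sub hρ v u
  rw [norm_sub_rev v u] at hlower
  calc ‖Φ u - Φ v‖ ≤ ‖-(t • (Φ w' - Φ u))‖ + ‖t • (Φ w - Φ v)‖ :=
        norm_le_add_of_le_of_le (by rwa [neg_le, neg_sub]) hupper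
    _ = t * ‖Φ w' - Φ u‖ + t * ‖Φ w - Φ v‖ := by
        rw [norm_neg, norm_smul, norm_smul, Real.norm_of_nonneg ht]
    _ ≤ t * (2 * C) + t * (2 * C) := by
        gcongr
        · exact hdiff (hnear hv hw') (hR hu)
        · exact hdiff (hnear hu hw) (hR hv)
    _ ≤ 4 * C / ρ * d := by
        have htd : t ≤ d / ρ :=
          div_le_div_of_nonneg_left (norm_nonneg _) hρ (by linarith [norm_nonneg (u - v)])
        calc t * (2 * C) + t * (2 * C) = 4 * C * t := by ring
          _ ≤ 4 * C * (d / ρ) := by gcongr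
          _ = 4 * C / ρ * d := by ring

theorem ConvexOn.continuous_of_forall_norm_le (hΦ : ConvexOn ℝ univ Φ)
    (hb : ∀ r : ℝ, 0 < r → ∃ M : ℝ, ∀ x : X, ‖x‖ ≤ r → ‖Φ x‖ ≤ M) : Continuous Φ := by
  refine continuous_iff_continuousAt.2 fun y => ?_
  obtain ⟨C, hC⟩ := hb (‖y‖ + (1 + 1)) (by positivity)
  have hlip : LipschitzOnWith (4 * C / 1).toNNReal Φ (closedBall y 1) :=
    LipschitzOnWith.of_dist_le' fun u hu v hv => by
      simpa only [dist_eq_norm] using hΦ.norm_sub_le_of_norm_le_on_closedBall one_pos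
        (fun p hp => hC p (norm_le_of_mem_closedBall hp)) hu hv
  exact hlip.continuousOn.continuousAt (closedBall_mem_nhds y one_pos)

/-- Convexity gives an upper bound at `y` through the reflection `2 • x - y₀` of `y₀` in `x`, and a
lower bound through the reflection `2 • y₀ - x` of `x` in `y₀`. -/
theorem ConvexOn.norm_le_of_forall_mem_ball_norm_le (hΦ : ConvexOn ℝ univ Φ) {y₀ : X} {ε C : ℝ}
    (hC : ∀ y ∈ ball y₀ ε, ‖Φ y‖ ≤ C) (x : X) {y : X} (hy : y ∈ ball x (ε / 2)) :
    ‖Φ y‖ ≤ ‖Φ ((2 : ℝ) • x - y₀)‖ + ‖Φ ((2 : ℝ) • y₀ - x)‖ + 3 * C := by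
  have hyx : ‖y - x‖ < ε / 2 := mem_ball_iff_norm.1 hy
  have hC₀ : 0 ≤ C :=
    (norm_nonneg _).trans (hC y₀ (mem_ball_self (by linarith [norm_nonneg (y - x)])))
  set w := (2 : ℝ) • x - y₀
  set q := (2 : ℝ) • y₀ - x
  set b := (2 : ℝ) • y - w
  set b' := (1 / 2 : ℝ) • y + (1 / 2 : ℝ) • q
  have hb : b ∈ ball y₀ ε := by
    rw [mem_ball_iff_norm, show b - y₀ = (2 : ℝ) • (y - x) by module, norm_smul]
    norm_num; linarith
  have hb' : b' ∈ ball y₀ ε := by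
    rw [mem_ball_iff_norm, show b' - y₀ = (1 / 2 : ℝ) • (y - x) by module, norm_smul]
    norm_num; linarith [norm_nonneg (y - x)]
  have hupper : Φ y ≤ (1 / 2 : ℝ) • Φ w + (1 / 2 : ℝ) • Φ b := by
    convert hΦ.2 (mem_univ w) (mem_univ b) (by norm_num : (0 : ℝ) ≤ 1 / 2)
      (by norm_num : (0 : ℝ) ≤ 1 / 2) (by norm_num) using 2
    module
  have hlower : Φ b' + Φ b' - Φ q ≤ Φ y := by
    have h := hΦ.2 (mem_univ y) (mem_univ q) (by norm_num : (0 : ℝ) ≤ 1 / 2)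
      (by norm_num : (0 : ℝ) ≤ 1 / 2) (by norm_num)
    rw [sub_le_iff_le_add]
    convert add_le_add h h using 1
    module
  have hupper' : ‖(1 / 2 : ℝ) • Φ w + (1 / 2 : ℝ) • Φ b‖ ≤ ‖Φ w‖ + C := by
    refine (norm_add_le _ _).trans ?_
    rw [norm_smul, norm_smul]
    norm_num
    linarith [hC b hb, norm_nonneg (Φ w)]
  have hlower' : ‖Φ b' + Φ b' - Φ q‖ ≤ ‖Φ q‖ + 2 * C :=
    (norm_sub_le _ _).trans (by linarith [norm_add_le (Φ b') (Φ b'), hC b' hb'])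
  linarith [norm_le_add_of_le_of_le hlower hupper]

end ConvexOperator

theorem exists_forall_mem_ball_norm_le_of_forall_norm_le {ι Y E : Type*} [MetricSpace Y]
    [CompleteSpace Y] [Nonempty Y] [SeminormedAddCommGroup E] {f : ι → Y → E}
    (hf : ∀ i, Continuous (f i))
    (hb : ∀ y, ∃ K, ∀ i, ‖f i y‖ ≤ K) :
    ∃ y₀, ∃ ε > 0, ∃ C, ∀ y ∈ ball y₀ ε, ∀ i, ‖f i y‖ ≤ C := by
  set F : ℕ → Set Y := fun n => ⋂ i, (fun y => ‖f i y‖) ⁻¹' Iic (n : ℝ)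
  have hF : ∀ n, IsClosed (F n) := fun n =>
    isClosed_iInter fun i => isClosed_Iic.preimage (hf i).norm
  have hcover : ⋃ n, F n = univ := eq_univ_of_forall fun y => by
    obtain ⟨K, hK⟩ := hb y
    obtain ⟨n, hn⟩ := exists_nat_ge K
    exact mem_iUnion.2 ⟨n, mem_iInter.2 fun i => (hK i).trans hn⟩
  obtain ⟨n, y₀, hy₀⟩ := nonempty_interior_of_iUnion_of_closed hF hcover
  obtain ⟨ε, hε, hball⟩ := Metric.isOpen_iff.1 isOpen_interior y₀ hy₀
  exact ⟨y₀, ε, hε, n, fun y hy i =>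
    mem_iInter.1 (interior_subset (hball hy) : y ∈ F n) i⟩

theorem norm_sub_le_mul_abs_of_forall_norm_add_sub_le {E : Type*} [SeminormedAddCommGroup E]
    {f : ℝ → E} {a b K δ : ℝ} (hδ : 0 < δ)
    (hstep : ∀ s ∈ Icc a b, ∀ h ∈ Ioc 0 δ, ‖f (s + h) - f s‖ ≤ K * h) {s t : ℝ}
    (hs : s ∈ Icc a b) (ht : t ∈ Icc a b) : ‖f t - f s‖ ≤ K * |t - s| := by
  wlog hst : s ≤ t generalizing s t
  · rw [norm_sub_rev, abs_sub_comm]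
    exact this ht hs (le_of_not_ge hst)
  have key : ∀ n : ℕ, ∀ s t, a ≤ s → s ≤ t → t ≤ b → t - s ≤ n * δ →
      ‖f t - f s‖ ≤ K * (t - s) := by
    intro n
    induction n with
    | zero =>
      intro s t _ hst _ hn
      obtain rfl : t = s := by push_cast at hn; linarith
      simp
    | succ n ih =>
      intro s t has hst htb hn
      rcases le_or_gt (t - s) δ with hshort | hlong
      · rcases hst.eq_or_lt with rfl | hlt
        · simp
        simpa using hstep s ⟨has, hst.trans htb⟩ (t - s) ⟨sub_pos.2 hlt, hshort⟩
      calc ‖f t - f s‖ ≤ ‖f t - f (s + δ)‖ + ‖f (s + δ) - f s‖ :=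
            norm_sub_le_norm_sub_add_norm_sub _ _ _
        _ ≤ K * (t - (s + δ)) + K * δ := by
            gcongr
            · exact ih _ _ (by linarith) (by linarith) htb (by push_cast at hn; linarith)
            · exact hstep s ⟨has, hst.trans htb⟩ δ ⟨hδ, le_rfl⟩
        _ = K * (t - s) := by ring
  obtain ⟨n, hn⟩ := exists_nat_ge ((t - s) / δ)
  rw [abs_of_nonneg (sub_nonneg.2 hst)]
  exact key n s t hs.1 hst ht.2 ((div_le_iff₀ hδ).1 hn)

theorem exists_forall_mem_Icc_norm_le_of_semigroup {X : Type*} [NormedAddCommGroup X]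
    {S : ℝ → X → X}
    (hbdd : ∀ t : ℝ, 0 ≤ t → ∀ r : ℝ, 0 < r → ∃ M : ℝ, ∀ x : X, ‖x‖ ≤ r → ‖S t x‖ ≤ M)
    (hid : ∀ x : X, S 0 x = x)
    (hsg : ∀ s t : ℝ, 0 ≤ s → 0 ≤ t → ∀ x : X, S (t + s) x = S t (S s x))
    (hc0 : ∀ x : X, Tendsto (fun t : ℝ => S t x) (𝓝[>] (0 : ℝ)) (𝓝 x)) (y : X) (T : ℝ) :
    ∃ K, ∀ t ∈ Icc 0 T, ‖S t y‖ ≤ K := by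
  obtain ⟨δ, hδ, hnear⟩ := Metric.tendsto_nhdsWithin_nhds.1 (hc0 y) 1 one_pos
  have hshort : ∀ t ∈ Icc 0 (δ / 2), ‖S t y‖ ≤ ‖y‖ + 1 := by
    rintro t ⟨ht₀, htδ⟩
    rcases ht₀.eq_or_lt with rfl | ht₀
    · rw [hid]; linarith
    have h := hnear (mem_Ioi.2 ht₀) (by rw [Real.dist_eq, sub_zero, abs_of_pos ht₀]; linarith)
    rw [dist_eq_norm] at h
    linarith [norm_le_insert' (S t y) y]
  have hgrow : ∀ n : ℕ, ∃ K, ∀ t ∈ Icc 0 (n * (δ / 2)), ‖S t y‖ ≤ K := by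
    intro n
    induction n with
    | zero => exact ⟨‖y‖, fun t ⟨ht₀, ht⟩ => by rw [le_antisymm (by simpa using ht) ht₀, hid]⟩
    | succ n ih =>
      obtain ⟨K, hK⟩ := ih
      set τ := n * (δ / 2)
      obtain ⟨K', hK'⟩ := hbdd τ (by positivity) (‖y‖ + 1) (by positivity)
      refine ⟨max K K', fun t ⟨ht₀, ht⟩ => ?_⟩
      rcases le_or_gt t τ with htτ | htτ
      · exact (hK t ⟨ht₀, htτ⟩).trans (le_max_left _ _)
      have hsplit := hsg (t - τ) τ (by linarith) (by positivity) y
      rw [add_sub_cancel] at hsplit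
      rw [hsplit]
      refine (hK' _ (hshort _ ⟨by linarith, ?_⟩)).trans (le_max_right _ _)
      push_cast at ht
      linarith [show τ = n * (δ / 2) from rfl]
  obtain ⟨n, hn⟩ := exists_nat_ge (T / (δ / 2))
  obtain ⟨K, hK⟩ := hgrow n
  exact ⟨K, fun t ht => hK t ⟨ht.1, ht.2.trans ((div_le_iff₀ (by positivity)).1 hn)⟩⟩

theorem exists_forall_norm_sub_le_of_convex_semigroup {X : Type*} [NormedAddCommGroup X]
    [Lattice X] [HasSolidNorm X] [IsOrderedAddMonoid X] [NormedSpace ℝ X] [CompleteSpace X]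
    {S : ℝ → X → X} (hconv : ∀ t : ℝ, 0 ≤ t → ConvexOn ℝ univ (S t))
    (hbdd : ∀ t : ℝ, 0 ≤ t → ∀ r : ℝ, 0 < r → ∃ M : ℝ, ∀ x : X, ‖x‖ ≤ r → ‖S t x‖ ≤ M)
    (hid : ∀ x : X, S 0 x = x)
    (hsg : ∀ s t : ℝ, 0 ≤ s → 0 ≤ t → ∀ x : X, S (t + s) x = S t (S s x))
    (hc0 : ∀ x : X, Tendsto (fun t : ℝ => S t x) (𝓝[>] (0 : ℝ)) (𝓝 x)) (x : X) {T : ℝ}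
    (hT : 0 ≤ T) :
    ∃ ρ > 0, ∃ L ≥ 0, ∀ t ∈ Icc 0 T, ∀ u ∈ closedBall x ρ, ∀ v ∈ closedBall x ρ,
      ‖S t u - S t v‖ ≤ L * ‖u - v‖ := by
  have horbit := exists_forall_mem_Icc_norm_le_of_semigroup hbdd hid hsg hc0
  obtain ⟨y₀, ε, hε, n, hn⟩ := exists_forall_mem_ball_norm_le_of_forall_norm_le
    (f := fun t : Icc 0 T => S t)
    (fun t => (hconv t t.2.1).continuous_of_forall_norm_le (hbdd t t.2.1))
    fun y => (horbit y T).imp fun K hK t => hK t t.2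
  obtain ⟨Kw, hKw⟩ := horbit ((2 : ℝ) • x - y₀) T
  obtain ⟨Kq, hKq⟩ := horbit ((2 : ℝ) • y₀ - x) T
  set C := Kw + Kq + 3 * n
  have hC : ∀ t ∈ Icc 0 T, ∀ y ∈ closedBall x (ε / 8 + ε / 8), ‖S t y‖ ≤ C := fun t ht y hy =>
    ((hconv t ht.1).norm_le_of_forall_mem_ball_norm_le (fun y hy => hn y hy ⟨t, ht⟩) x
      (closedBall_subset_ball (by linarith) hy)).trans (by linarith [hKw t ht, hKq t ht])
  have hC₀ : 0 ≤ C :=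
    (norm_nonneg _).trans (hC 0 ⟨le_rfl, hT⟩ x (mem_closedBall_self (by positivity)))
  refine ⟨ε / 8, by positivity, 4 * C / (ε / 8), by positivity, fun t ht u hu v hv => ?_⟩
  exact (hconv t ht.1).norm_sub_le_of_norm_le_on_closedBall (by positivity) (hC t ht) hu hv

theorem convex_semigroup_orbit_locally_lipschitz_general
    {X : Type*} [NormedAddCommGroup X] [Lattice X] [HasSolidNorm X] [IsOrderedAddMonoid X]
    [NormedSpace ℝ X] [CompleteSpace X]
    (S : ℝ → X → X)
    (hconv : ∀ t : ℝ, 0 ≤ t → ∀ x y : X, ∀ a : ℝ, 0 ≤ a → a ≤ 1 →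
      S t (a • x + (1 - a) • y) ≤ a • S t x + (1 - a) • S t y)
    (hbdd : ∀ t : ℝ, 0 ≤ t → ∀ r : ℝ, 0 < r → ∃ M : ℝ, ∀ x : X, ‖x‖ ≤ r → ‖S t x‖ ≤ M)
    (hid : ∀ x : X, S 0 x = x)
    (hsg : ∀ s t : ℝ, 0 ≤ s → 0 ≤ t → ∀ x : X, S (t + s) x = S t (S s x))
    (hc0 : ∀ x : X, Tendsto (fun t : ℝ => S t x) (𝓝[>] (0 : ℝ)) (𝓝 x))
    (x : X) (h₀ : ℝ) (hh₀ : 0 < h₀) (M : ℝ)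
    (hquot : ∀ h : ℝ, h ∈ Ioc (0 : ℝ) h₀ → ‖h⁻¹ • (S h x - x)‖ ≤ M) :
    ∀ T : ℝ, 0 < T → ∃ L : ℝ, 0 ≤ L ∧
      ∀ s t : ℝ, s ∈ Icc (0 : ℝ) T → t ∈ Icc (0 : ℝ) T →
        ‖S t x - S s x‖ ≤ L * |t - s| := by
  intro T hT
  have hconvOn : ∀ t : ℝ, 0 ≤ t → ConvexOn ℝ univ (S t) := fun t ht =>
    ⟨convex_univ, fun u _ v _ a b ha _ hab => by
      obtain rfl : b = 1 - a := by linarith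
      exact hconv t ht u v a ha (by linarith)⟩
  obtain ⟨ρ, hρ, L, hL, hlip⟩ :=
    exists_forall_norm_sub_le_of_convex_semigroup hconvOn hbdd hid hsg hc0 x hT.le
  have hM : 0 ≤ M := (norm_nonneg _).trans (hquot h₀ ⟨hh₀, le_rfl⟩)
  have hδ : 0 < min h₀ (ρ / (M + 1)) := lt_min hh₀ (by positivity)
  refine ⟨L * M, mul_nonneg hL hM, fun s t hs ht =>
    norm_sub_le_mul_abs_of_forall_norm_add_sub_le (f := fun t => S t x) hδ
      (fun r hr h hh => ?_) hs ht⟩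
  have hhx : ‖S h x - x‖ ≤ M * h := by
    have := hquot h ⟨hh.1, hh.2.trans (min_le_left _ _)⟩
    rwa [norm_smul, norm_inv, Real.norm_of_nonneg hh.1.le, inv_mul_le_iff₀ hh.1, mul_comm] at this
  have hhρ : S h x ∈ closedBall x ρ := by
    rw [mem_closedBall, dist_eq_norm]
    calc ‖S h x - x‖ ≤ (M + 1) * (ρ / (M + 1)) := hhx.trans (by
          nlinarith [hh.1, hh.2.trans (min_le_right _ _)])
      _ = ρ := mul_div_cancel₀ _ (by positivity)
  rw [hsg h r hh.1.le hr.1]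
  calc ‖S r (S h x) - S r x‖ ≤ L * ‖S h x - x‖ := hlip r hr _ hhρ x (mem_closedBall_self hρ.le)
    _ ≤ L * M * h := by rw [mul_assoc]; gcongr

/-- If the difference quotients `(S(h)x − x)/h` are bounded for `h ∈ (0,h₀]`,
then the orbit `t ↦ S(t)x` of the convex C₀-semigroup `S` is locally Lipschitz on `[0,∞)`. -/
theorem convex_semigroup_orbit_locally_lipschitz
    {X : Type*} [NormedAddCommGroup X] [Lattice X] [HasSolidNorm X] [IsOrderedAddMonoid X]
    [NormedSpace ℝ X] [CompleteSpace X]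
    [PosSMulStrictMono ℝ X]
    (S : ℝ → X → X)
    (hconv : ∀ t : ℝ, 0 ≤ t → ∀ x y : X, ∀ a : ℝ, 0 ≤ a → a ≤ 1 →
      S t (a • x + (1 - a) • y) ≤ a • S t x + (1 - a) • S t y)
    (hbdd : ∀ t : ℝ, 0 ≤ t → ∀ r : ℝ, 0 < r → ∃ M : ℝ, ∀ x : X, ‖x‖ ≤ r → ‖S t x‖ ≤ M)
    (hid : ∀ x : X, S 0 x = x)
    (hsg : ∀ s t : ℝ, 0 ≤ s → 0 ≤ t → ∀ x : X, S (t + s) x = S t (S s x))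
    (hc0 : ∀ x : X, Tendsto (fun t : ℝ => S t x) (𝓝[>] (0 : ℝ)) (𝓝 x))
    (x : X) (h₀ : ℝ) (hh₀ : 0 < h₀) (M : ℝ)
    (hquot : ∀ h : ℝ, h ∈ Ioc (0 : ℝ) h₀ → ‖h⁻¹ • (S h x - x)‖ ≤ M) :
    ∀ T : ℝ, 0 < T → ∃ L : ℝ, 0 ≤ L ∧
      ∀ s t : ℝ, s ∈ Icc (0 : ℝ) T → t ∈ Icc (0 : ℝ) T →
        ‖S t x - S s x‖ ≤ L * |t - s| :=
  convex_semigroup_orbit_locally_lipschitz_general S hconv hbdd hid hsg hc0 x h₀ hh₀ M hquot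
end

section
/- Let X be a Banach lattice with order continuous norm and let S : X → X be a bounded convex operator. Then for all x, y ∈ X the set {(S(x+hy) − S(x))/h : h > 0} has a greatest lower bound z ∈ X, and the difference quotients converge to it in norm: ‖(S(x+hy) − S(x))/h − z‖ → 0 as h ↓ 0. -/
/-!
Along the line `t ↦ S (x + t • y)` the operator is a convex function `ℝ → X`, so its difference
quotients at `0` increase with `h` and are bounded below by `S x - S (x - y)`. Dedekind
σ-completeness gives an infimum `z` of the quotients at `h = 1 / (n + 1)`, which by monotonicity is
the infimum of all of them. σ-order continuity turns the order convergence of this decreasing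
sequence into norm convergence, and solidity of the norm passes it on to all small `h`.
-/

open Filter Topology Set

section ConvexSlope

variable {β : Type*} [AddCommGroup β] [PartialOrder β] [Module ℝ β] [PosSMulMono ℝ β] {g : ℝ → β}

theorem ConvexOn.smul_apply_le_of_mem_Icc (hg : ConvexOn ℝ univ g) {a b c : ℝ}
    (hb : b ∈ Icc a c) : (c - a) • g b ≤ (c - b) • g a + (b - a) • g c := by
  obtain ⟨hab, hbc⟩ := hb
  rcases (hab.trans hbc).eq_or_lt with rfl | hac
  · obtain rfl := le_antisymm hab hbc
    simp
  have hca : 0 < c - a := sub_pos.2 hac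
  have hconv := hg.2 (mem_univ a) (mem_univ c) (div_nonneg (sub_nonneg.2 hbc) hca.le)
    (div_nonneg (sub_nonneg.2 hab) hca.le) (by field_simp; ring)
  have hcomb : ((c - b) / (c - a)) • a + ((b - a) / (c - a)) • c = b := by
    simp only [smul_eq_mul]; field_simp; ring
  rw [hcomb] at hconv
  calc (c - a) • g b
      ≤ (c - a) • (((c - b) / (c - a)) • g a + ((b - a) / (c - a)) • g c) :=
        smul_le_smul_of_nonneg_left hconv hca.le
    _ = (c - b) • g a + (b - a) • g c := by
        rw [smul_add, smul_smul, smul_smul, mul_div_cancel₀ _ hca.ne',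
          mul_div_cancel₀ _ hca.ne']

variable [IsOrderedAddMonoid β]

theorem ConvexOn.monotoneOn_slope_zero (hg : ConvexOn ℝ univ g) :
    MonotoneOn (fun h : ℝ => h⁻¹ • (g h - g 0)) (Ioi 0) := by
  intro h₁ (hh₁ : 0 < h₁) h₂ (hh₂ : 0 < h₂) hle
  have key := hg.smul_apply_le_of_mem_Icc ⟨hh₁.le, hle⟩
  simp only [sub_zero] at key
  have cross : h₂ • (g h₁ - g 0) ≤ h₁ • (g h₂ - g 0) := by
    convert sub_le_sub_right key (h₂ • g 0) using 1 <;> module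
  rwa [inv_smul_le_iff_of_pos hh₁, smul_comm, le_inv_smul_iff_of_pos hh₂]

theorem ConvexOn.sub_le_slope_zero (hg : ConvexOn ℝ univ g) {h : ℝ}
    (hh : 0 < h) : g 0 - g (-1) ≤ h⁻¹ • (g h - g 0) := by
  have key := hg.smul_apply_le_of_mem_Icc (a := -1) (b := 0) ⟨by norm_num, hh.le⟩
  rw [le_inv_smul_iff_of_pos hh]
  convert sub_le_sub_right key (h • g (-1) + g 0) using 1 <;> module

end ConvexSlope

section OrderedGroup

variable {X : Type*} [AddCommGroup X] [PartialOrder X] [IsOrderedAddMonoid X]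

theorem exists_isGLB_range_of_bddBelow
    (hDed : ∀ f : ℕ → X, BddAbove (range f) → ∃ s : X, IsLUB (range f) s) {f : ℕ → X}
    (hf : BddBelow (range f)) : ∃ z, IsGLB (range f) z := by
  obtain ⟨s, hs⟩ := hDed (fun n => -f n) hf.range_neg
  refine ⟨-s, isLUB_neg'.1 ?_⟩
  rwa [neg_neg, ← image_neg_eq_neg, ← range_comp]

theorem IsGLB.range_sub_const {f : ℕ → X} {z : X} (hz : IsGLB (range f) z) :
    IsGLB (range fun n => f n - z) 0 := by
  have := (OrderIso.addRight (-z)).isGLB_image'.2 hz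
  simpa [← range_comp, Function.comp_def, ← sub_eq_add_neg] using this

end OrderedGroup

theorem MonotoneOn.isGLB_image_Ioi_of_isGLB_range {α : Type*} [Preorder α] {Q : ℝ → α}
    (hQ : MonotoneOn Q (Ioi 0)) {u : ℕ → ℝ} (hu : ∀ n, 0 < u n)
    (hu0 : Tendsto u atTop (𝓝 0)) {z : α} (hz : IsGLB (range fun n => Q (u n)) z) :
    IsGLB (Q '' Ioi 0) z := by
  refine ⟨?_, fun w hw => hz.2 ?_⟩
  · rintro _ ⟨h, hh, rfl⟩
    obtain ⟨n, hn⟩ := (hu0.eventually (gt_mem_nhds hh)).exists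
    exact (hz.1 ⟨n, rfl⟩).trans (hQ (hu n) hh hn.le)
  · rintro _ ⟨n, rfl⟩
    exact hw ⟨u n, hu n, rfl⟩

theorem tendsto_of_antitone_of_isGLB {X : Type*} [NormedAddCommGroup X] [PartialOrder X]
    [IsOrderedAddMonoid X]
    (hoc : ∀ f : ℕ → X, Antitone f → IsGLB (range f) 0 → Tendsto (fun n => ‖f n‖) atTop (𝓝 0))
    {f : ℕ → X} (hf : Antitone f) {z : X} (hz : IsGLB (range f) z) :
    Tendsto f atTop (𝓝 z) :=
  tendsto_iff_norm_sub_tendsto_zero.2 <|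
    hoc _ (fun _ _ hmn => sub_le_sub_right (hf hmn) z) hz.range_sub_const

section SolidNorm

variable {X : Type*} [NormedAddCommGroup X] [Lattice X] [IsOrderedAddMonoid X] [HasSolidNorm X]

theorem norm_le_norm_of_nonneg_of_le {a b : X} (ha : 0 ≤ a) (hab : a ≤ b) : ‖a‖ ≤ ‖b‖ :=
  norm_le_norm_of_abs_le_abs <| by rwa [abs_of_nonneg ha, abs_of_nonneg (ha.trans hab)]

theorem tendsto_nhdsGT_of_monotoneOn {Q : ℝ → X} (hQ : MonotoneOn Q (Ioi 0)) {z : X}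
    (hz : ∀ h, 0 < h → z ≤ Q h) {u : ℕ → ℝ} (hu : ∀ n, 0 < u n)
    (hlim : Tendsto (fun n => Q (u n)) atTop (𝓝 z)) : Tendsto Q (𝓝[>] 0) (𝓝 z) := by
  rw [tendsto_iff_norm_sub_tendsto_zero] at hlim ⊢
  refine tendsto_order.2 ⟨fun ε hε => .of_forall fun h => hε.trans_le (norm_nonneg _),
    fun ε hε => ?_⟩
  obtain ⟨N, hN⟩ := (hlim.eventually (gt_mem_nhds hε)).exists
  filter_upwards [Ioo_mem_nhdsGT (hu N)] with h ⟨hh, hhN⟩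
  exact (norm_le_norm_of_nonneg_of_le (sub_nonneg.2 (hz h hh))
    (sub_le_sub_right (hQ hh (hu N) hhN.le) z)).trans_lt hN

end SolidNorm

theorem convex_operator_directional_derivative_exists_general
    {X : Type*} [NormedAddCommGroup X] [Lattice X] [IsOrderedAddMonoid X]
    [HasSolidNorm X] [NormedSpace ℝ X]
    [PosSMulStrictMono ℝ X]
    (hDed : ∀ f : ℕ → X, BddAbove (Set.range f) → ∃ s : X, IsLUB (Set.range f) s)
    (hoc : ∀ f : ℕ → X, Antitone f → IsGLB (Set.range f) 0 →
      Tendsto (fun n => ‖f n‖) atTop (𝓝 (0 : ℝ)))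
    (S : X → X)
    (hconv : ∀ x y : X, ∀ a : ℝ, 0 ≤ a → a ≤ 1 →
      S (a • x + (1 - a) • y) ≤ a • S x + (1 - a) • S y)
    (x y : X) :
    ∃ z : X,
      IsGLB {w : X | ∃ h : ℝ, 0 < h ∧ w = h⁻¹ • (S (x + h • y) - S x)} z ∧
      Tendsto (fun h : ℝ => h⁻¹ • (S (x + h • y) - S x)) (𝓝[>] (0 : ℝ)) (𝓝 z) := by
  have hg : ConvexOn ℝ univ fun t : ℝ => S (x + t • y) := by
    refine ⟨convex_univ, fun s _ t _ a b ha _ hab => ?_⟩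
    obtain rfl : b = 1 - a := by linarith
    convert hconv (x + s • y) (x + t • y) a ha (by linarith) using 2
    module
  set Q : ℝ → X := fun h => h⁻¹ • (S (x + h • y) - S x)
  have hQ : MonotoneOn Q (Ioi 0) := by simpa using hg.monotoneOn_slope_zero
  have hu : ∀ n : ℕ, 0 < 1 / ((n : ℝ) + 1) := fun _ => Nat.one_div_pos_of_nat
  obtain ⟨z, hz⟩ := exists_isGLB_range_of_bddBelow hDed (f := fun n : ℕ => Q (1 / (n + 1)))
    ⟨S x - S (x - y), by
      rintro _ ⟨n, rfl⟩
      simpa only [zero_smul, add_zero, neg_one_smul, ← sub_eq_add_neg]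
        using hg.sub_le_slope_zero (hu n)⟩
  have hGLB : IsGLB (Q '' Ioi 0) z :=
    hQ.isGLB_image_Ioi_of_isGLB_range hu tendsto_one_div_add_atTop_nhds_zero_nat hz
  refine ⟨z, by convert hGLB using 1; ext; simp [Q, eq_comm], ?_⟩
  exact tendsto_nhdsGT_of_monotoneOn hQ (fun h hh => hGLB.1 ⟨h, hh, rfl⟩) hu
    (tendsto_of_antitone_of_isGLB hoc
      (fun _ _ hmn => hQ (hu _) (hu _) (Nat.one_div_le_one_div hmn)) hz)

/-- On a Banach lattice with order continuous norm (formalized via Dedekind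
σ-completeness and σ-order continuity of the norm), for every bounded convex operator `S`
and all `x, y`, the set of difference quotients `{(S(x+hy) − S(x))/h : h > 0}` has a
greatest lower bound `z`, and the quotients converge to `z` in norm as `h ↓ 0`. -/
theorem convex_operator_directional_derivative_exists
    {X : Type*} [NormedAddCommGroup X] [Lattice X] [IsOrderedAddMonoid X]
    [HasSolidNorm X] [NormedSpace ℝ X] [CompleteSpace X]
    [PosSMulStrictMono ℝ X] [PosSMulReflectLT ℝ X]
    (hDed : ∀ f : ℕ → X, BddAbove (Set.range f) → ∃ s : X, IsLUB (Set.range f) s)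
    (hoc : ∀ f : ℕ → X, Antitone f → IsGLB (Set.range f) 0 →
      Tendsto (fun n => ‖f n‖) atTop (𝓝 (0 : ℝ)))
    (S : X → X)
    (hconv : ∀ x y : X, ∀ a : ℝ, 0 ≤ a → a ≤ 1 →
      S (a • x + (1 - a) • y) ≤ a • S x + (1 - a) • S y)
    (hbdd : ∀ r : ℝ, 0 < r → ∃ M : ℝ, ∀ x : X, ‖x‖ ≤ r → ‖S x‖ ≤ M)
    (x y : X) :
    ∃ z : X,
      IsGLB {w : X | ∃ h : ℝ, 0 < h ∧ w = h⁻¹ • (S (x + h • y) - S x)} z ∧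
      Tendsto (fun h : ℝ => h⁻¹ • (S (x + h • y) - S x)) (𝓝[>] (0 : ℝ)) (𝓝 z) :=
  convex_operator_directional_derivative_exists_general hDed hoc S hconv x y
end

section
/- Let X be a Banach lattice with order continuous norm, S a convex C₀-semigroup on X with generator A, and x ∈ D(A). Then for every t ≥ 0, S(t)x − x = ∫₀ᵗ A S(s)x ds = ∫₀ᵗ S'₊(s,x)(Ax) ds = ∫₀ᵗ S'₋(s,x)(Ax) ds, where the integrals are X-valued (Bochner) integrals of the continuous integrand s ↦ A S(s)x. -/
/-!
Write `φ(s) = S(s)x`. On the right, `φ(s+h) = S(s)(S(h)x)` with `S(h)x = x + hAx + o(h)`, so a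
Lipschitz bound for `S(s)` near `x` turns the quotient of `φ` into that of `S(s)` in direction
`Ax`, whose limit is `S'₊(s,x)(Ax)`. On the left, `S(s)(x - hAx) = S(s-h)(S(h)(x - hAx))`, and
convexity squeezes `S(h)(x - hAx)` to `x + o(h)`; now the Lipschitz bound is needed for all
`S(s-h)` at once. Convex operators bounded near a point are Lipschitz there, and a Baire category
argument makes these bounds uniform for times in compact intervals; this also gives continuity of
`φ` and bounds on its one-sided derivatives, so the fundamental theorem of calculus for one-sided
derivatives applies. Finally `S(h)(S(s)x) = S(s+h)x`, so the right derivative also identifies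
`A S(s)x`.
-/

open Filter Topology Set Metric MeasureTheory
open scoped NNReal

section Calculus

variable {F : Type*} [NormedAddCommGroup F] [NormedSpace ℝ F] {f f' : ℝ → F} {D : F} {x : ℝ}

theorem hasDerivWithinAt_Ioi_iff_tendsto_slope_zero_right :
    HasDerivWithinAt f D (Ioi x) x ↔ Tendsto (fun h ↦ h⁻¹ • (f (x + h) - f x)) (𝓝[>] 0) (𝓝 D) := by
  rw [hasDerivWithinAt_iff_tendsto_slope' self_notMem_Ioi, ← add_zero x, ← map_add_left_nhdsGT,
    tendsto_map'_iff, add_zero]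
  simp [Function.comp_def, slope_def_module]

theorem hasDerivWithinAt_Iio_iff_tendsto_slope_zero_left :
    HasDerivWithinAt f D (Iio x) x ↔ Tendsto (fun h ↦ h⁻¹ • (f x - f (x - h))) (𝓝[>] 0) (𝓝 D) := by
  rw [hasDerivWithinAt_iff_tendsto_slope' self_notMem_Iio, ← sub_zero x, ← map_subLeft_nhdsGT,
    tendsto_map'_iff, sub_zero]
  refine tendsto_congr' (eventually_nhdsWithin_of_forall fun h (hh : 0 < h) ↦ ?_)
  simp only [Function.comp_apply, slope_def_module, sub_sub_cancel_left, inv_neg, neg_smul,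
    ← smul_neg, neg_sub]

theorem tendsto_add_smul_nhdsGT_zero (v w : F) :
    Tendsto (fun h : ℝ ↦ v + h • w) (𝓝[>] 0) (𝓝 v) :=
  ((continuous_const.add (continuous_id.smul continuous_const)).tendsto' 0 v (by simp)).mono_left
    nhdsWithin_le_nhds

variable [CompleteSpace F] {a b C : ℝ}

theorem integral_eq_sub_of_hasDerivWithinAt_Ioi_of_norm_le (hab : a ≤ b)
    (hf : ContinuousOn f (Icc a b)) (hderiv : ∀ x ∈ Ico a b, HasDerivWithinAt f (f' x) (Ioi x) x)
    (hbound : ∀ x ∈ Ico a b, ‖f' x‖ ≤ C) : ∫ x in a..b, f' x = f b - f a := by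
  have hae : ∀ᵐ x ∂volume.restrict (Ioo a b), f' x = derivWithin f (Ici x) x :=
    ae_restrict_of_forall_mem measurableSet_Ioo fun x hx ↦
      ((hderiv x (Ioo_subset_Ico_self hx)).Ici_of_Ioi.derivWithin (uniqueDiffWithinAt_Ici x)).symm
  refine intervalIntegral.integral_eq_sub_of_hasDeriv_right_of_le hab hf
    (fun x hx ↦ hderiv x (Ioo_subset_Ico_self hx)) ?_
  rw [intervalIntegrable_iff_integrableOn_Ioo_of_le hab]
  exact .of_bound measure_Ioo_lt_top
    ((aestronglyMeasurable_derivWithin_Ici f _).congr (EventuallyEq.symm hae)) C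
    (ae_restrict_of_forall_mem measurableSet_Ioo fun x hx ↦ hbound x (Ioo_subset_Ico_self hx))

theorem integral_eq_sub_of_hasDerivWithinAt_Iio_of_norm_le (hab : a ≤ b)
    (hf : ContinuousOn f (Icc a b)) (hderiv : ∀ x ∈ Ioc a b, HasDerivWithinAt f (f' x) (Iio x) x)
    (hbound : ∀ x ∈ Ioc a b, ‖f' x‖ ≤ C) : ∫ x in a..b, f' x = f b - f a := by
  have hreflect := integral_eq_sub_of_hasDerivWithinAt_Ioi_of_norm_le (f := fun x ↦ f (-x))
    (f' := fun x ↦ -f' (-x)) (C := C) (neg_le_neg hab)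
    (hf.comp continuousOn_neg fun x hx ↦ ⟨le_neg.2 hx.2, neg_le.2 hx.1⟩)
    (fun x hx ↦ by
      have := hderiv (-x) ⟨lt_neg.2 hx.2, neg_le.2 hx.1⟩
      rw [hasDerivWithinAt_Iio_iff_tendsto_slope_zero_left] at this
      rw [hasDerivWithinAt_Ioi_iff_tendsto_slope_zero_right]
      simpa [neg_add, ← smul_neg, sub_eq_add_neg, add_comm] using this.neg)
    (fun x hx ↦ by simpa using hbound (-x) ⟨lt_neg.2 hx.2, neg_le.2 hx.1⟩)
  rw [intervalIntegral.integral_neg, ← intervalIntegral.integral_comp_neg] at hreflect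
  simpa using congrArg Neg.neg hreflect

end Calculus

section Lipschitz

variable {F G : Type*} [NormedAddCommGroup F] [NormedSpace ℝ F] [NormedAddCommGroup G]
  [NormedSpace ℝ G] {T : ℝ → F → G} {f g : ℝ → F} {U : Set F} {K : ℝ≥0}

theorem eventually_norm_inv_smul_sub_le_of_lipschitzOnWith
    (hT : ∀ᶠ h in 𝓝[>] 0, LipschitzOnWith K (T h) U) (hf : ∀ᶠ h in 𝓝[>] 0, f h ∈ U)
    (hg : ∀ᶠ h in 𝓝[>] 0, g h ∈ U) :
    ∀ᶠ h in 𝓝[>] (0 : ℝ), ‖h⁻¹ • (T h (f h) - T h (g h))‖ ≤ K * ‖h⁻¹ • (f h - g h)‖ := by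
  filter_upwards [hT, hf, hg] with h hTh hfh hgh
  rw [norm_smul, norm_smul, mul_left_comm]
  exact mul_le_mul_of_nonneg_left (hTh.norm_sub_le hfh hgh) (norm_nonneg _)

theorem tendsto_inv_smul_sub_of_lipschitzOnWith
    (hT : ∀ᶠ h in 𝓝[>] 0, LipschitzOnWith K (T h) U) (hf : ∀ᶠ h in 𝓝[>] 0, f h ∈ U)
    (hg : ∀ᶠ h in 𝓝[>] 0, g h ∈ U) (hfg : Tendsto (fun h ↦ h⁻¹ • (f h - g h)) (𝓝[>] 0) (𝓝 0)) :
    Tendsto (fun h ↦ h⁻¹ • (T h (f h) - T h (g h))) (𝓝[>] 0) (𝓝 0) :=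
  squeeze_zero_norm' (eventually_norm_inv_smul_sub_le_of_lipschitzOnWith hT hf hg)
    (by simpa using hfg.norm.const_mul (K : ℝ))

theorem LipschitzOnWith.norm_le_of_tendsto_inv_smul_sub {T : F → G} {x y : F} {D : G}
    (hT : LipschitzOnWith K T U) (hU : U ∈ 𝓝 x) (hf : Tendsto f (𝓝[>] 0) (𝓝 x))
    (hg : Tendsto g (𝓝[>] 0) (𝓝 x)) (hfg : ∀ h, f h - g h = h • y)
    (hD : Tendsto (fun h ↦ h⁻¹ • (T (f h) - T (g h))) (𝓝[>] 0) (𝓝 D)) : ‖D‖ ≤ K * ‖y‖ := by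
  have hy : Tendsto (fun h ↦ h⁻¹ • (f h - g h)) (𝓝[>] 0) (𝓝 y) :=
    tendsto_const_nhds.congr' (eventually_nhdsWithin_of_forall fun h (hh : 0 < h) ↦ by
      simp only [hfg, inv_smul_smul₀ hh.ne'])
  exact le_of_tendsto_of_tendsto hD.norm (hy.norm.const_mul (K : ℝ))
    (eventually_norm_inv_smul_sub_le_of_lipschitzOnWith (T := fun _ ↦ T)
      (Eventually.of_forall fun _ ↦ hT) (hf.eventually_mem hU) (hg.eventually_mem hU))

end Lipschitz

section OrderedVectorSpace

variable {V W : Type*} [AddCommGroup V] [Module ℝ V] [AddCommGroup W] [PartialOrder W]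
  [IsOrderedAddMonoid W] [Module ℝ W] {T : V → W}

theorem ConvexOn.sub_le_smul_sub_s11 (hT : ConvexOn ℝ univ T) (q z : V) {c : ℝ} (hc₀ : 0 ≤ c)
    (hc₁ : c ≤ 1) : T (q + c • (z - q)) - T q ≤ c • (T z - T q) := by
  have := hT.2 (mem_univ z) (mem_univ q) hc₀ (sub_nonneg.2 hc₁) (add_sub_cancel c 1)
  rw [show c • z + (1 - c) • q = q + c • (z - q) by module] at this
  calc T (q + c • (z - q)) - T q ≤ c • T z + (1 - c) • T q - T q := sub_le_sub_right this _
    _ = c • (T z - T q) := by module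

variable [PosSMulMono ℝ W]

theorem ConvexOn.two_smul_le_add (hT : ConvexOn ℝ univ T) {a b u : V} (h : a + b = (2 : ℝ) • u) :
    (2 : ℝ) • T u ≤ T a + T b := by
  have := hT.sub_le_smul_sub_s11 a b (c := 1 / 2) (by norm_num) (by norm_num)
  have hu : u = (1 / 2 : ℝ) • (a + b) := by rw [h, smul_smul]; norm_num
  rw [show a + (1 / 2 : ℝ) • (b - a) = u by rw [hu]; module] at this
  calc (2 : ℝ) • T u = (2 : ℝ) • (T u - T a) + (2 : ℝ) • T a := by module
    _ ≤ (2 : ℝ) • ((1 / 2 : ℝ) • (T b - T a)) + (2 : ℝ) • T a := by gcongr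
    _ = T a + T b := by module

theorem ConvexOn.right_slope_mono (hT : ConvexOn ℝ univ T) (x y : V) {h₁ h₂ : ℝ} (h₁0 : 0 < h₁)
    (h₁₂ : h₁ ≤ h₂) : h₁⁻¹ • (T (x + h₁ • y) - T x) ≤ h₂⁻¹ • (T (x + h₂ • y) - T x) := by
  have h₂0 : 0 < h₂ := h₁0.trans_le h₁₂
  have := hT.sub_le_smul_sub_s11 x (x + h₂ • y) (c := h₁ / h₂) (by positivity)
    ((div_le_one h₂0).2 h₁₂)
  rw [show x + (h₁ / h₂) • (x + h₂ • y - x) = x + h₁ • y by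
    rw [add_sub_cancel_left, smul_smul, div_mul_cancel₀ _ h₂0.ne']] at this
  calc h₁⁻¹ • (T (x + h₁ • y) - T x) ≤ h₁⁻¹ • ((h₁ / h₂) • (T (x + h₂ • y) - T x)) := by
        gcongr
    _ = h₂⁻¹ • (T (x + h₂ • y) - T x) := by rw [smul_smul]; congr 1; field_simp

theorem ConvexOn.left_slope_le_right_slope (hT : ConvexOn ℝ univ T) (x y : V) {h h' : ℝ}
    (hh : 0 < h) (hh' : 0 < h') :
    h'⁻¹ • (T x - T (x - h' • y)) ≤ h⁻¹ • (T (x + h • y) - T x) := by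
  set L := T x - T (x - h' • y)
  set R := T (x + h • y) - T x
  have hsum : 0 < h + h' := by linarith
  have key := hT.sub_le_smul_sub_s11 (x - h' • y) (x + h • y) (c := h' / (h + h')) (by positivity)
    ((div_le_one hsum).2 (by linarith))
  rw [show x - h' • y + (h' / (h + h')) • (x + h • y - (x - h' • y)) = x by
    match_scalars <;> field_simp <;> ring,
    show T (x + h • y) - T (x - h' • y) = L + R by simp only [L, R]; abel] at key
  have hLR : h • L ≤ h' • R := by
    have := smul_le_smul_of_nonneg_left key hsum.le
    rw [smul_smul, mul_div_cancel₀ _ hsum.ne', add_smul, smul_add] at this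
    exact le_of_add_le_add_right (a := h' • L) (by rwa [add_comm (h' • L)] at this)
  calc h'⁻¹ • L = (h * h')⁻¹ • (h • L) := by rw [smul_smul]; congr 1; field_simp
    _ ≤ (h * h')⁻¹ • (h' • R) := by gcongr
    _ = h⁻¹ • R := by rw [smul_smul]; congr 1; field_simp

end OrderedVectorSpace

section NormedLattice

variable {E : Type*} [NormedAddCommGroup E] [Lattice E] [HasSolidNorm E] [IsOrderedAddMonoid E]

theorem norm_le_norm_add_norm_of_le_of_le_s11 {a b c : E} (hbc : b ≤ c) (hca : c ≤ a) :
    ‖c‖ ≤ ‖a‖ + ‖b‖ := by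
  have habs : |c| ≤ |(|a| + |b|)| := by
    rw [abs_of_nonneg (add_nonneg (abs_nonneg a) (abs_nonneg b))]
    refine abs_le'.2 ⟨hca.trans ((le_abs_self a).trans (le_add_of_nonneg_right (abs_nonneg b))), ?_⟩
    exact (neg_le_neg hbc).trans ((neg_le_abs b).trans (le_add_of_nonneg_left (abs_nonneg a)))
  calc ‖c‖ ≤ ‖|a| + |b|‖ := norm_le_norm_of_abs_le_abs habs
    _ ≤ ‖a‖ + ‖b‖ := by simpa only [norm_abs_eq_norm] using norm_add_le |a| |b|

theorem tendsto_of_tendsto_of_tendsto_of_le_of_le_of_hasSolidNorm {α : Type*} {l : Filter α}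
    {f g k : α → E} {c : E} (hg : Tendsto g l (𝓝 c)) (hk : Tendsto k l (𝓝 c))
    (hgf : ∀ᶠ i in l, g i ≤ f i) (hfk : ∀ᶠ i in l, f i ≤ k i) : Tendsto f l (𝓝 c) := by
  rw [← tendsto_sub_nhds_zero_iff] at hg hk ⊢
  refine squeeze_zero_norm' ?_ (by simpa using hk.norm.add hg.norm)
  filter_upwards [hgf, hfk] with i hgi hki
  exact norm_le_norm_add_norm_of_le_of_le_s11 (sub_le_sub_right hgi c) (sub_le_sub_right hki c)

variable [NormedSpace ℝ E] {F : Type*} [NormedAddCommGroup F] [NormedSpace ℝ F] {T : F → E}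

theorem ConvexOn.lipschitzOnWith_of_norm_le (hT : ConvexOn ℝ univ T) {v : F} {δ M : ℝ}
    (hδ : 0 < δ) (hM : ∀ u ∈ closedBall v δ, ‖T u‖ ≤ M) :
    LipschitzOnWith (8 * M / δ).toNNReal T (closedBall v (δ / 2)) := by
  have hM0 : 0 ≤ M := (norm_nonneg _).trans (hM v (mem_closedBall_self hδ.le))
  refine LipschitzOnWith.of_dist_le_mul fun u hu w hw ↦ ?_
  rw [Real.coe_toNNReal _ (by positivity), dist_eq_norm, dist_eq_norm]
  rcases eq_or_ne u w with rfl | hne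
  · simp
  set d := ‖u - w‖
  have hd : 0 < d := norm_pos_iff.2 (sub_ne_zero.2 hne)
  set c := d / (d + δ / 2)
  have one_sided : ∀ p ∈ closedBall v (δ / 2), ∀ q ∈ closedBall v (δ / 2), ‖p - q‖ = d →
      ∃ e : E, T p - T q ≤ c • e ∧ ‖e‖ ≤ 2 * M := by
    intro p hp q hq hpq
    -- `z` prolongs the segment from `q` to `p` by `δ / 2` beyond `p`, so it stays in the big ball.
    set z := p + (δ / 2 / d) • (p - q)
    have hz : z ∈ closedBall v δ := by
      rw [mem_closedBall, dist_eq_norm] at hp ⊢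
      calc ‖z - v‖ ≤ ‖p - v‖ + ‖(δ / 2 / d) • (p - q)‖ := by
            rw [show z - v = (p - v) + (δ / 2 / d) • (p - q) by simp only [z]; abel]
            exact norm_add_le _ _
        _ ≤ δ / 2 + δ / 2 := by
            rw [norm_smul, Real.norm_of_nonneg (by positivity), hpq, div_mul_cancel₀ _ hd.ne']
            linarith
        _ = δ := by ring
    have hp_eq : q + c • (z - q) = p := by
      simp only [z, c]; match_scalars <;> field_simp; ring
    refine ⟨T z - T q, ?_, ?_⟩
    · simpa [hp_eq] using hT.sub_le_smul_sub_s11 q z (c := c) (by positivity)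
        ((div_le_one (by positivity)).2 (by linarith))
    · calc ‖T z - T q‖ ≤ M + M := (norm_sub_le _ _).trans (add_le_add (hM z hz)
            (hM q (closedBall_subset_closedBall (by linarith) hq)))
        _ = 2 * M := by ring
  obtain ⟨e, he, hen⟩ := one_sided u hu w hw rfl
  obtain ⟨e', he', hen'⟩ := one_sided w hw u hu (norm_sub_rev _ _)
  have hc : c ≤ 2 * d / δ := by
    rw [div_le_div_iff₀ (by positivity) hδ]; nlinarith
  calc ‖T u - T w‖ ≤ ‖c • e‖ + ‖-(c • e')‖ :=
        norm_le_norm_add_norm_of_le_of_le_s11 (neg_le.2 (by rwa [neg_sub])) he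
    _ = c * (‖e‖ + ‖e'‖) := by
        rw [norm_neg, norm_smul, norm_smul, Real.norm_of_nonneg (by positivity)]; ring
    _ ≤ (2 * d / δ) * (2 * M + 2 * M) := by gcongr
    _ = 8 * M / δ * d := by ring

theorem ConvexOn.continuous_of_bounded_s11 (hT : ConvexOn ℝ univ T)
    (hb : ∀ r, 0 < r → ∃ M, ∀ u, ‖u‖ ≤ r → ‖T u‖ ≤ M) : Continuous T := by
  refine continuous_iff_continuousAt.2 fun v ↦ ?_
  obtain ⟨M, hM⟩ := hb (‖v‖ + 1) (by positivity)
  have hlip := hT.lipschitzOnWith_of_norm_le one_pos fun u hu ↦ hM u (norm_le_of_mem_closedBall hu)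
  exact hlip.continuousOn.continuousAt (closedBall_mem_nhds v (by norm_num))

variable [PosSMulMono ℝ E]

theorem ConvexOn.norm_le_of_norm_le_on_ball (hT : ConvexOn ℝ univ T) {u₀ v : F} {r N M : ℝ}
    (hN : ∀ u ∈ ball u₀ r, ‖T u‖ ≤ N) (hw : ‖T ((2 : ℝ) • v - u₀)‖ ≤ M)
    (hw' : ‖T ((3 : ℝ) • u₀ - (2 : ℝ) • v)‖ ≤ M) (u : F) (hu : u ∈ ball v (r / 2)) :
    ‖T u‖ ≤ 3 * N + M := by
  -- `u` is the midpoint of `u₀ + 2(u - v)` and `w`, which bounds `T u` from above; `u₀` is the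
  -- midpoint of `u` and `q`, and `q` that of `u₀ + 2(v - u)` and `w'`, which bounds it from below.
  set w := (2 : ℝ) • v - u₀
  set w' := (3 : ℝ) • u₀ - (2 : ℝ) • v
  set q := (2 : ℝ) • u₀ - u
  have hball : ∀ y, ‖y‖ < r / 2 → u₀ + (2 : ℝ) • y ∈ ball u₀ r := fun y hy ↦ by
    rw [mem_ball, dist_eq_norm, add_sub_cancel_left, norm_smul, Real.norm_two]; linarith
  rw [mem_ball, dist_eq_norm] at hu
  have hN₁ := hN _ (hball (u - v) hu)
  have hN₂ := hN _ (hball (v - u) (by rwa [norm_sub_rev]))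
  have hN₀ := hN u₀ (mem_ball_self (by linarith [norm_nonneg (u - v)]))
  have hupper : (2 : ℝ) • T u ≤ T (u₀ + (2 : ℝ) • (u - v)) + T w :=
    hT.two_smul_le_add (by simp only [w]; module)
  have hmid : (2 : ℝ) • T u₀ ≤ T u + T q := hT.two_smul_le_add (by simp only [q]; module)
  have hq : (2 : ℝ) • T q ≤ T (u₀ + (2 : ℝ) • (v - u)) + T w' :=
    hT.two_smul_le_add (by simp only [q, w']; module)
  have hlower : (4 : ℝ) • T u₀ - (T (u₀ + (2 : ℝ) • (v - u)) + T w') ≤ (2 : ℝ) • T u := by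
    have h4 : (4 : ℝ) • T u₀ ≤ (2 : ℝ) • T u + (2 : ℝ) • T q := by
      have := smul_le_smul_of_nonneg_left hmid (by norm_num : (0 : ℝ) ≤ 2)
      rwa [smul_smul, smul_add, show (2 : ℝ) * 2 = 4 by norm_num] at this
    calc (4 : ℝ) • T u₀ - (T (u₀ + (2 : ℝ) • (v - u)) + T w')
        ≤ (4 : ℝ) • T u₀ - (2 : ℝ) • T q := sub_le_sub_left hq _
      _ ≤ (2 : ℝ) • T u := sub_le_iff_le_add.2 h4
  have := norm_le_norm_add_norm_of_le_of_le_s11 hlower hupper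
  rw [norm_smul, Real.norm_two] at this
  have h1 := norm_add_le (T (u₀ + (2 : ℝ) • (u - v))) (T w)
  have h2 := norm_sub_le ((4 : ℝ) • T u₀) (T (u₀ + (2 : ℝ) • (v - u)) + T w')
  have h3 := norm_add_le (T (u₀ + (2 : ℝ) • (v - u))) (T w')
  rw [norm_smul, Real.norm_ofNat] at h2
  linarith

end NormedLattice

section Semigroup

variable {E : Type*} [NormedAddCommGroup E] [PartialOrder E] [NormedSpace ℝ E]

structure IsConvexC0Semigroup (S : ℝ → E → E) : Prop where
  convexOn : ∀ t, 0 ≤ t → ConvexOn ℝ univ (S t)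
  bounded : ∀ t, 0 ≤ t → ∀ r, 0 < r → ∃ M, ∀ x, ‖x‖ ≤ r → ‖S t x‖ ≤ M
  map_zero : ∀ x, S 0 x = x
  map_add : ∀ s t, 0 ≤ s → 0 ≤ t → ∀ x, S (t + s) x = S t (S s x)
  tendsto_nhdsGT_zero : ∀ x, Tendsto (fun t ↦ S t x) (𝓝[>] 0) (𝓝 x)

end Semigroup

namespace IsConvexC0Semigroup

section Normed

variable {E : Type*} [NormedAddCommGroup E] [PartialOrder E] [NormedSpace ℝ E] {S : ℝ → E → E}

theorem eventually_norm_le (hS : IsConvexC0Semigroup S) (x : E) :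
    ∀ᶠ τ in 𝓝[>] 0, ‖S τ x‖ ≤ ‖x‖ + 1 :=
  ((hS.tendsto_nhdsGT_zero x).norm.eventually (gt_mem_nhds (lt_add_one _))).mono fun _ ↦ le_of_lt

theorem tendsto_nhdsGE_zero (hS : IsConvexC0Semigroup S) (x : E) :
    Tendsto (fun τ ↦ S τ x) (𝓝[≥] 0) (𝓝 x) := by
  have := (continuousWithinAt_Ioi_iff_Ici (a := (0 : ℝ)) (f := fun τ ↦ S τ x)).1
    (by simpa [ContinuousWithinAt, hS.map_zero] using hS.tendsto_nhdsGT_zero x)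
  simpa [ContinuousWithinAt, hS.map_zero] using this

theorem norm_sub_le_of_lipschitzOnWith (hS : IsConvexC0Semigroup S) {σ σ' δ : ℝ} {K : ℝ≥0}
    {x : E} (hσ : 0 ≤ σ) (hσ' : 0 ≤ σ') (hK : LipschitzOnWith K (S (min σ σ')) (closedBall x δ))
    (hx : S |σ - σ'| x ∈ closedBall x δ) : ‖S σ x - S σ' x‖ ≤ K * ‖S |σ - σ'| x - x‖ := by
  have key : ∀ a b, 0 ≤ a → a ≤ b → LipschitzOnWith K (S a) (closedBall x δ) →
      S (b - a) x ∈ closedBall x δ → ‖S b x - S a x‖ ≤ K * ‖S (b - a) x - x‖ := by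
    intro a b ha hab hKa hba
    have hb : S b x = S a (S (b - a) x) := by
      rw [← hS.map_add _ _ (sub_nonneg.2 hab) ha, add_sub_cancel]
    rw [hb]
    exact hKa.norm_sub_le hba (mem_closedBall_self (dist_nonneg.trans hba))
  rcases le_total σ σ' with h | h
  · rw [min_eq_left h] at hK
    rw [abs_sub_comm, abs_of_nonneg (sub_nonneg.2 h)] at hx ⊢
    rw [norm_sub_rev]
    exact key σ σ' hσ h hK hx
  · rw [min_eq_right h] at hK
    rw [abs_of_nonneg (sub_nonneg.2 h)] at hx ⊢
    exact key σ' σ hσ' h hK hx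

end Normed

section NormedLattice

variable {E : Type*} [NormedAddCommGroup E] [Lattice E] [HasSolidNorm E] [IsOrderedAddMonoid E]
  [NormedSpace ℝ E] {S : ℝ → E → E}

theorem continuous (hS : IsConvexC0Semigroup S) {t : ℝ} (ht : 0 ≤ t) : Continuous (S t) :=
  (hS.convexOn t ht).continuous_of_bounded_s11 (hS.bounded t ht)

theorem tendsto_left_slope [PosSMulMono ℝ E] (hS : IsConvexC0Semigroup S) (x y : E) :
    Tendsto (fun h ↦ h⁻¹ • (S h x - S h (x - h • y))) (𝓝[>] 0) (𝓝 y) := by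
  refine tendsto_of_tendsto_of_tendsto_of_le_of_le_of_hasSolidNorm
    (g := fun h ↦ S h x - S h (x - y)) (k := fun h ↦ S h (x + y) - S h x)
    (by simpa using (hS.tendsto_nhdsGT_zero x).sub (hS.tendsto_nhdsGT_zero (x - y)))
    (by simpa using (hS.tendsto_nhdsGT_zero (x + y)).sub (hS.tendsto_nhdsGT_zero x)) ?_ ?_
  · filter_upwards [Ioc_mem_nhdsGT one_pos] with h hh
    have := (hS.convexOn h hh.1.le).right_slope_mono x (-y) hh.1 hh.2
    simp only [smul_neg, one_smul, inv_one, ← sub_eq_add_neg] at this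
    simpa only [← smul_neg, neg_sub] using neg_le_neg this
  · filter_upwards [self_mem_nhdsWithin] with h (hh : 0 < h)
    simpa using (hS.convexOn h hh.le).left_slope_le_right_slope x y one_pos hh

theorem exists_ball_eventually_norm_le [CompleteSpace E] (hS : IsConvexC0Semigroup S) :
    ∃ u₀ r N, 0 < r ∧ ∀ᶠ τ in 𝓝[>] 0, ∀ u ∈ ball u₀ r, ‖S τ u‖ ≤ N := by
  set F : ℕ → Set E := fun n ↦ ⋂ τ ∈ Ioc 0 (1 / ((n : ℝ) + 1)), {u | ‖S τ u‖ ≤ n}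
  have hclosed : ∀ n, IsClosed (F n) := fun n ↦
    isClosed_biInter fun τ hτ ↦ isClosed_le (hS.continuous hτ.1.le).norm continuous_const
  have hcover : ⋃ n, F n = univ := eq_univ_of_forall fun u ↦ by
    obtain ⟨ε, hε : 0 < ε, hsub⟩ := mem_nhdsGT_iff_exists_Ioc_subset.1 (hS.eventually_norm_le u)
    obtain ⟨n, hnε, hnu⟩ := ((tendsto_one_div_add_atTop_nhds_zero_nat.eventually
      (gt_mem_nhds hε)).and (tendsto_natCast_atTop_atTop.eventually_ge_atTop (‖u‖ + 1))).exists
    exact mem_iUnion.2 ⟨n, mem_iInter₂.2 fun τ hτ ↦ (hsub ⟨hτ.1, hτ.2.trans hnε.le⟩).trans hnu⟩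
  obtain ⟨n, u₀, hu₀⟩ := nonempty_interior_of_iUnion_of_closed hclosed hcover
  obtain ⟨r, hr, hball⟩ := isOpen_iff.1 isOpen_interior u₀ hu₀
  exact ⟨u₀, r, n, hr, mem_of_superset (Ioc_mem_nhdsGT (by positivity : (0 : ℝ) < 1 / (n + 1)))
    fun τ hτ u hu ↦ mem_iInter₂.1 (interior_subset (hball hu)) τ hτ⟩

variable [CompleteSpace E] [PosSMulMono ℝ E]

theorem exists_closedBall_eventually_norm_le (hS : IsConvexC0Semigroup S) (v : E) :
    ∃ δ > 0, ∃ M, ∀ᶠ τ in 𝓝[>] 0, ∀ u ∈ closedBall v δ, ‖S τ u‖ ≤ M := by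
  obtain ⟨u₀, r, N, hr, hN⟩ := hS.exists_ball_eventually_norm_le
  set w := (2 : ℝ) • v - u₀
  set w' := (3 : ℝ) • u₀ - (2 : ℝ) • v
  refine ⟨r / 4, by positivity, 3 * N + max (‖w‖ + 1) (‖w'‖ + 1), ?_⟩
  filter_upwards [hN, hS.eventually_norm_le w, hS.eventually_norm_le w', self_mem_nhdsWithin]
    with τ hτN hw hw' (hτ : 0 < τ) u hu
  exact (hS.convexOn τ hτ.le).norm_le_of_norm_le_on_ball hτN (hw.trans (le_max_left _ _))
    (hw'.trans (le_max_right _ _)) u (closedBall_subset_ball (by linarith) hu)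

theorem exists_closedBall_norm_le (hS : IsConvexC0Semigroup S) (v : E) (T : ℝ) :
    ∃ δ > 0, ∃ M, ∀ τ ∈ Icc 0 T, ∀ u ∈ closedBall v δ, ‖S τ u‖ ≤ M := by
  obtain ⟨δ, hδ, M₀, hM₀⟩ := hS.exists_closedBall_eventually_norm_le v
  obtain ⟨ε, hε : 0 < ε, hsub⟩ := mem_nhdsGT_iff_exists_Ioc_subset.1 hM₀
  -- For `τ ∈ (kε, (k+1)ε]`, `S τ = S (kε) ∘ S (τ - kε)` with `S (kε)` bounded on bounded sets.
  have hstep : ∀ k : ℕ, ∃ M, ∀ τ ∈ Icc 0 (k * ε), ∀ u ∈ closedBall v δ, ‖S τ u‖ ≤ M := by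
    intro k
    induction k with
    | zero =>
      refine ⟨‖v‖ + δ, fun τ hτ u hu ↦ ?_⟩
      obtain rfl : τ = 0 := by simpa using hτ
      rw [hS.map_zero]
      exact norm_le_of_mem_closedBall hu
    | succ k ih =>
      obtain ⟨Mk, hMk⟩ := ih
      obtain ⟨M', hM'⟩ := hS.bounded (k * ε) (by positivity) (max M₀ 1) (by positivity)
      refine ⟨max Mk M', fun τ hτ u hu ↦ ?_⟩
      rcases le_or_gt τ (k * ε) with hle | hgt
      · exact (hMk τ ⟨hτ.1, hle⟩ u hu).trans (le_max_left _ _)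
      · have hr : τ - k * ε ∈ Ioc 0 ε := ⟨sub_pos.2 hgt, by push_cast at hτ; linarith [hτ.2]⟩
        have hτ_eq : S τ u = S (k * ε) (S (τ - k * ε) u) := by
          rw [← hS.map_add _ _ hr.1.le (by positivity), add_sub_cancel]
        rw [hτ_eq]
        exact (hM' _ ((hsub hr u hu).trans (le_max_left _ _))).trans (le_max_right _ _)
  obtain ⟨k, hk⟩ := exists_nat_ge (T / ε)
  obtain ⟨M, hM⟩ := hstep k
  exact ⟨δ, hδ, M, fun τ hτ ↦ hM τ ⟨hτ.1, hτ.2.trans ((div_le_iff₀ hε).1 hk)⟩⟩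

theorem exists_lipschitzOnWith (hS : IsConvexC0Semigroup S) (v : E) (T : ℝ) :
    ∃ δ > 0, ∃ K, ∀ τ ∈ Icc 0 T, LipschitzOnWith K (S τ) (closedBall v δ) := by
  obtain ⟨δ, hδ, M, hM⟩ := hS.exists_closedBall_norm_le v T
  exact ⟨δ / 2, by positivity, _, fun τ hτ ↦
    (hS.convexOn τ hτ.1).lipschitzOnWith_of_norm_le hδ (hM τ hτ)⟩

theorem continuousOn_trajectory (hS : IsConvexC0Semigroup S) (x : E) :
    ContinuousOn (fun τ ↦ S τ x) (Ici 0) := by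
  intro σ₀ hσ₀
  obtain ⟨δ, hδ, K, hK⟩ := hS.exists_lipschitzOnWith x σ₀
  have hdist : Tendsto (fun σ ↦ |σ - σ₀|) (𝓝[Ici 0] σ₀) (𝓝[≥] 0) :=
    tendsto_nhdsWithin_of_tendsto_nhds_of_eventually_within _
      (((continuous_id.sub continuous_const).abs.tendsto' σ₀ 0 (by simp)).mono_left
        nhdsWithin_le_nhds) (Eventually.of_forall fun _ ↦ mem_Ici.2 (abs_nonneg _))
  have hSdist := (hS.tendsto_nhdsGE_zero x).comp hdist
  rw [ContinuousWithinAt, ← tendsto_sub_nhds_zero_iff]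
  refine squeeze_zero_norm' ?_
    (by simpa using (tendsto_sub_nhds_zero_iff.2 hSdist).norm.const_mul (K : ℝ))
  filter_upwards [self_mem_nhdsWithin, hSdist.eventually (closedBall_mem_nhds x hδ)]
    with σ (hσ : 0 ≤ σ) hball
  exact hS.norm_sub_le_of_lipschitzOnWith hσ hσ₀
    (hK _ ⟨le_min hσ hσ₀, min_le_right _ _⟩) hball

theorem continuous_trajectory (hS : IsConvexC0Semigroup S) (x : E) :
    Continuous fun τ ↦ S (max τ 0) x :=
  (hS.continuousOn_trajectory x).comp_continuous (continuous_id.max continuous_const)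
    fun τ ↦ le_max_right τ 0

theorem tendsto_generator_quotient_apply (hS : IsConvexC0Semigroup S) {x y D : E} {s : ℝ}
    (hs : 0 ≤ s)
    (hx : Tendsto (fun h : ℝ ↦ h⁻¹ • (S h x - x)) (𝓝[>] 0) (𝓝 y))
    (hD : Tendsto (fun h : ℝ ↦ h⁻¹ • (S s (x + h • y) - S s x)) (𝓝[>] 0) (𝓝 D)) :
    Tendsto (fun h : ℝ ↦ h⁻¹ • (S h (S s x) - S s x)) (𝓝[>] 0) (𝓝 D) := by
  obtain ⟨δ, hδ, K, hK⟩ := hS.exists_lipschitzOnWith x s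
  have hball := closedBall_mem_nhds x hδ
  have hfg : Tendsto (fun h : ℝ ↦ h⁻¹ • (S h x - (x + h • y))) (𝓝[>] 0) (𝓝 0) := by
    rw [← sub_self y]
    refine (hx.sub_const y).congr' (eventually_nhdsWithin_of_forall fun h (hh : 0 < h) ↦ ?_)
    simp only [sub_add_eq_sub_sub, smul_sub, inv_smul_smul₀ hh.ne']
  have herr := tendsto_inv_smul_sub_of_lipschitzOnWith (T := fun _ ↦ S s)
    (Eventually.of_forall fun _ ↦ hK s ⟨hs, le_rfl⟩)
    ((hS.tendsto_nhdsGT_zero x).eventually_mem hball)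
    ((tendsto_add_smul_nhdsGT_zero x y).eventually_mem hball) hfg
  have hsum : Tendsto (fun h : ℝ ↦ h⁻¹ • (S s (x + h • y) - S s x) +
      h⁻¹ • (S s (S h x) - S s (x + h • y))) (𝓝[>] 0) (𝓝 D) := by simpa using hD.add herr
  refine hsum.congr' (eventually_nhdsWithin_of_forall fun h (hh : 0 < h) ↦ ?_)
  rw [← smul_add, sub_add_sub_cancel', ← hS.map_add h s hh.le hs, add_comm,
    hS.map_add s h hs hh.le]

theorem hasDerivWithinAt_Ioi (hS : IsConvexC0Semigroup S) {x y D : E} {s : ℝ} (hs : 0 ≤ s)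
    (hx : Tendsto (fun h : ℝ ↦ h⁻¹ • (S h x - x)) (𝓝[>] 0) (𝓝 y))
    (hD : Tendsto (fun h : ℝ ↦ h⁻¹ • (S s (x + h • y) - S s x)) (𝓝[>] 0) (𝓝 D)) :
    HasDerivWithinAt (fun σ ↦ S (max σ 0) x) D (Ioi s) s := by
  rw [hasDerivWithinAt_Ioi_iff_tendsto_slope_zero_right]
  refine (hS.tendsto_generator_quotient_apply hs hx hD).congr'
    (eventually_nhdsWithin_of_forall fun h (hh : 0 < h) ↦ ?_)
  simp only [max_eq_left hs, max_eq_left (by linarith : 0 ≤ s + h)]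
  rw [add_comm, hS.map_add s h hs hh.le]

theorem hasDerivWithinAt_Iio (hS : IsConvexC0Semigroup S) {x y D : E} {s : ℝ} (hs : 0 < s)
    (hx : Tendsto (fun h : ℝ ↦ h⁻¹ • (S h x - x)) (𝓝[>] 0) (𝓝 y))
    (hD : Tendsto (fun h : ℝ ↦ h⁻¹ • (S s x - S s (x - h • y))) (𝓝[>] 0) (𝓝 D)) :
    HasDerivWithinAt (fun σ ↦ S (max σ 0) x) D (Iio s) s := by
  obtain ⟨δ, hδ, K, hK⟩ := hS.exists_lipschitzOnWith x s
  have hball := closedBall_mem_nhds x hδ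
  set f := fun h ↦ S h (x - h • y)
  -- `S h (x - h • y) = x + o(h)`: the generator quotient and the left slope both tend to `y`.
  have hfx : Tendsto (fun h : ℝ ↦ h⁻¹ • (f h - x)) (𝓝[>] 0) (𝓝 0) := by
    have := hx.sub (hS.tendsto_left_slope x y)
    rw [sub_self] at this
    refine this.congr' (Eventually.of_forall fun h ↦ ?_)
    rw [← smul_sub, sub_sub_sub_cancel_left]
  have hf : Tendsto f (𝓝[>] 0) (𝓝 x) := by
    have := ((tendsto_id.mono_left nhdsWithin_le_nhds).smul hfx).const_add x
    rw [smul_zero, add_zero] at this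
    refine this.congr' (eventually_nhdsWithin_of_forall fun h (hh : 0 < h) ↦ ?_)
    simp [smul_inv_smul₀ hh.ne']
  have herr := tendsto_inv_smul_sub_of_lipschitzOnWith (T := fun h ↦ S (s - h)) (g := fun _ ↦ x)
    (mem_of_superset (Ioo_mem_nhdsGT hs) fun h hh ↦
      hK (s - h) ⟨by linarith [hh.2], by linarith [hh.1]⟩)
    (hf.eventually_mem hball) (Eventually.of_forall fun _ ↦ mem_closedBall_self hδ.le) hfx
  have hsum : Tendsto (fun h : ℝ ↦ h⁻¹ • (S s x - S s (x - h • y)) +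
      h⁻¹ • (S (s - h) (f h) - S (s - h) x)) (𝓝[>] 0) (𝓝 D) := by simpa using hD.add herr
  rw [hasDerivWithinAt_Iio_iff_tendsto_slope_zero_left]
  refine hsum.congr' ?_
  filter_upwards [Ioo_mem_nhdsGT hs] with h hh
  have hshift : S s (x - h • y) = S (s - h) (f h) := by
    rw [← hS.map_add h (s - h) hh.1.le (by linarith [hh.2]), sub_add_cancel]
  rw [max_eq_left hs.le, max_eq_left (by linarith [hh.2]), hshift, ← smul_add,
    sub_add_sub_cancel]

theorem integral_eq_sub_of_tendsto_right_slope (hS : IsConvexC0Semigroup S) {x y : E}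
    {D : ℝ → E} {t : ℝ} (ht : 0 ≤ t)
    (hx : Tendsto (fun h : ℝ ↦ h⁻¹ • (S h x - x)) (𝓝[>] 0) (𝓝 y))
    (hD : ∀ s, 0 ≤ s → Tendsto (fun h : ℝ ↦ h⁻¹ • (S s (x + h • y) - S s x)) (𝓝[>] 0) (𝓝 (D s))) :
    ∫ s in 0..t, D s = S t x - x := by
  obtain ⟨δ, hδ, K, hK⟩ := hS.exists_lipschitzOnWith x t
  have := integral_eq_sub_of_hasDerivWithinAt_Ioi_of_norm_le ht
    (hS.continuous_trajectory x).continuousOn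
    (fun s hs ↦ hS.hasDerivWithinAt_Ioi hs.1 hx (hD s hs.1))
    (C := K * ‖y‖) fun s hs ↦ (hK s (Ico_subset_Icc_self hs)).norm_le_of_tendsto_inv_smul_sub
      (closedBall_mem_nhds x hδ) (tendsto_add_smul_nhdsGT_zero x y) tendsto_const_nhds
      (fun _ ↦ add_sub_cancel_left _ _) (hD s hs.1)
  simpa [max_eq_left ht, hS.map_zero] using this

theorem integral_eq_sub_of_tendsto_left_slope (hS : IsConvexC0Semigroup S) {x y : E}
    {D : ℝ → E} {t : ℝ} (ht : 0 ≤ t)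
    (hx : Tendsto (fun h : ℝ ↦ h⁻¹ • (S h x - x)) (𝓝[>] 0) (𝓝 y))
    (hD : ∀ s, 0 < s → Tendsto (fun h : ℝ ↦ h⁻¹ • (S s x - S s (x - h • y))) (𝓝[>] 0) (𝓝 (D s))) :
    ∫ s in 0..t, D s = S t x - x := by
  obtain ⟨δ, hδ, K, hK⟩ := hS.exists_lipschitzOnWith x t
  have := integral_eq_sub_of_hasDerivWithinAt_Iio_of_norm_le ht
    (hS.continuous_trajectory x).continuousOn
    (fun s hs ↦ hS.hasDerivWithinAt_Iio hs.1 hx (hD s hs.1))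
    (C := K * ‖y‖) fun s hs ↦ (hK s (Ioc_subset_Icc_self hs)).norm_le_of_tendsto_inv_smul_sub
      (closedBall_mem_nhds x hδ) tendsto_const_nhds
      (by simpa [← sub_eq_add_neg] using tendsto_add_smul_nhdsGT_zero x (-y))
      (fun _ ↦ sub_sub_cancel _ _) (hD s hs.1)
  simpa [max_eq_left ht, hS.map_zero] using this

end NormedLattice

end IsConvexC0Semigroup

variable {X : Type*} [NormedAddCommGroup X] [Lattice X] [HasSolidNorm X] [IsOrderedAddMonoid X] [NormedSpace ℝ X] [CompleteSpace X]

/-- Domain of the generator of a semigroup `S`. -/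
def genDom (S : ℝ → X → X) : Set X :=
  {x : X | ∃ z : X, Tendsto (fun h : ℝ => h⁻¹ • (S h x - x)) (𝓝[>] (0 : ℝ)) (𝓝 z)}

theorem semigroup_fundamental_theorem_of_calculus_general
    [PosSMulStrictMono ℝ X]
    (S : ℝ → X → X)
    (hconv : ∀ t : ℝ, 0 ≤ t → ∀ x y : X, ∀ a : ℝ, 0 ≤ a → a ≤ 1 →
      S t (a • x + (1 - a) • y) ≤ a • S t x + (1 - a) • S t y)
    (hbdd : ∀ t : ℝ, 0 ≤ t → ∀ r : ℝ, 0 < r → ∃ M : ℝ, ∀ x : X, ‖x‖ ≤ r → ‖S t x‖ ≤ M)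
    (hid : ∀ x : X, S 0 x = x)
    (hsg : ∀ s t : ℝ, 0 ≤ s → 0 ≤ t → ∀ x : X, S (t + s) x = S t (S s x))
    (hc0 : ∀ x : X, Tendsto (fun t : ℝ => S t x) (𝓝[>] (0 : ℝ)) (𝓝 x))
    (A : X → X)
    (hA : ∀ x ∈ genDom S, Tendsto (fun h : ℝ => h⁻¹ • (S h x - x)) (𝓝[>] (0 : ℝ)) (𝓝 (A x)))
    (x : X) (hx : x ∈ genDom S)
    (Dp Dm : ℝ → X)
    (hDp : ∀ s : ℝ, 0 ≤ s →
      Tendsto (fun h : ℝ => h⁻¹ • (S s (x + h • A x) - S s x)) (𝓝[>] (0 : ℝ)) (𝓝 (Dp s)))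
    (hDm : ∀ s : ℝ, 0 ≤ s →
      Tendsto (fun h : ℝ => h⁻¹ • (S s x - S s (x - h • A x))) (𝓝[>] (0 : ℝ)) (𝓝 (Dm s)))
    (t : ℝ) (ht : 0 ≤ t) :
    S t x - x = ∫ s in (0 : ℝ)..t, A (S s x) ∧
    S t x - x = ∫ s in (0 : ℝ)..t, Dp s ∧
    S t x - x = ∫ s in (0 : ℝ)..t, Dm s := by
  have hS : IsConvexC0Semigroup S :=
    ⟨fun τ hτ ↦ ⟨convex_univ, fun u _ v _ a b ha _ hab ↦ by
      obtain rfl := eq_sub_of_add_eq' hab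
      exact hconv τ hτ u v a ha (by linarith)⟩, hbdd, hid, hsg, hc0⟩
  have hAx := hA x hx
  have hDp_int := hS.integral_eq_sub_of_tendsto_right_slope ht hAx hDp
  refine ⟨?_, hDp_int.symm,
    (hS.integral_eq_sub_of_tendsto_left_slope ht hAx fun s hs ↦ hDm s hs.le).symm⟩
  rw [← hDp_int]
  refine intervalIntegral.integral_congr fun s hs ↦ ?_
  have hs₀ : 0 ≤ s := by rw [uIcc_of_le ht] at hs; exact hs.1
  have hlim := hS.tendsto_generator_quotient_apply hs₀ hAx (hDp s hs₀)
  exact tendsto_nhds_unique hlim (hA _ ⟨_, hlim⟩)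

/-- For a convex C₀-semigroup `S` with generator `A` on a Banach lattice
with order continuous norm, `x ∈ D(A)`, and `Dp s = S'₊(s,x)(Ax)`, `Dm s = S'₋(s,x)(Ax)`
the directional derivatives, one has for every `t ≥ 0`:
`S(t)x − x = ∫₀ᵗ A S(s)x ds = ∫₀ᵗ S'₊(s,x)(Ax) ds = ∫₀ᵗ S'₋(s,x)(Ax) ds`
(Bochner integrals). -/
theorem semigroup_fundamental_theorem_of_calculus
    [PosSMulStrictMono ℝ X] [PosSMulReflectLT ℝ X]
    (hDed : ∀ f : ℕ → X, BddAbove (Set.range f) → ∃ s : X, IsLUB (Set.range f) s)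
    (hoc : ∀ f : ℕ → X, Antitone f → IsGLB (Set.range f) 0 →
      Tendsto (fun n => ‖f n‖) atTop (𝓝 (0 : ℝ)))
    (S : ℝ → X → X)
    (hconv : ∀ t : ℝ, 0 ≤ t → ∀ x y : X, ∀ a : ℝ, 0 ≤ a → a ≤ 1 →
      S t (a • x + (1 - a) • y) ≤ a • S t x + (1 - a) • S t y)
    (hbdd : ∀ t : ℝ, 0 ≤ t → ∀ r : ℝ, 0 < r → ∃ M : ℝ, ∀ x : X, ‖x‖ ≤ r → ‖S t x‖ ≤ M)
    (hid : ∀ x : X, S 0 x = x)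
    (hsg : ∀ s t : ℝ, 0 ≤ s → 0 ≤ t → ∀ x : X, S (t + s) x = S t (S s x))
    (hc0 : ∀ x : X, Tendsto (fun t : ℝ => S t x) (𝓝[>] (0 : ℝ)) (𝓝 x))
    (A : X → X)
    (hA : ∀ x ∈ genDom S, Tendsto (fun h : ℝ => h⁻¹ • (S h x - x)) (𝓝[>] (0 : ℝ)) (𝓝 (A x)))
    (x : X) (hx : x ∈ genDom S)
    (Dp Dm : ℝ → X)
    (hDp : ∀ s : ℝ, 0 ≤ s →
      Tendsto (fun h : ℝ => h⁻¹ • (S s (x + h • A x) - S s x)) (𝓝[>] (0 : ℝ)) (𝓝 (Dp s)))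
    (hDm : ∀ s : ℝ, 0 ≤ s →
      Tendsto (fun h : ℝ => h⁻¹ • (S s x - S s (x - h • A x))) (𝓝[>] (0 : ℝ)) (𝓝 (Dm s)))
    (t : ℝ) (ht : 0 ≤ t) :
    S t x - x = ∫ s in (0 : ℝ)..t, A (S s x) ∧
    S t x - x = ∫ s in (0 : ℝ)..t, Dp s ∧
    S t x - x = ∫ s in (0 : ℝ)..t, Dm s :=
  semigroup_fundamental_theorem_of_calculus_general S hconv hbdd hid hsg hc0 A hA x hx Dp Dm hDp hDm
    t ht
end
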